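/- arXiv:math/0402035 — 5 statements merged into one kernel-verified Lean document; each statement's English description precedes it below -/
import Mathlib

section
/- Let f : A → B be a map between connected CW-complexes (equivalently, a group homomorphism φ : G → H induced on fundamental groups arising from a map inducing an isomorphism on H₁ and a surjection on H₂). Then for all k ≥ 2, f induces an isomorphism of nilpotent quotients π₁(A)/π₁(A)_k ≅ π₁(B)/π₁(B)_k, where G_k denotes the k-th term of the lower central series. (Group-theoretic form: if φ : G → H induces an isomorphism G/[G,G] ≅ H/[H,H] and a surjection H₂(G) → H₂(H), then φ induces isomorphisms G/G_k ≅ H/H_k for all k ≥ 2.) -/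
open Function
open scoped commutatorElement
open Function

lemma mem_lcs_succ_left {H : Type*} [Group H] {n : ℕ} {c : H} (hc : c ∈ (⊤ : Subgroup H).lowerCentralSeries n)
    (h : H) : ⁅c, h⁆ ∈ (⊤ : Subgroup H).lowerCentralSeries (n + 1) := by
  show ⁅c, h⁆ ∈ ⁅(⊤ : Subgroup H).lowerCentralSeries n, ⊤⁆
  exact Subgroup.commutator_mem_commutator hc (Subgroup.mem_top h)

lemma mem_lcs_succ_right {H : Type*} [Group H] {n : ℕ} {c : H} (hc : c ∈ (⊤ : Subgroup H).lowerCentralSeries n)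
    (h : H) : ⁅h, c⁆ ∈ (⊤ : Subgroup H).lowerCentralSeries (n + 1) := by
  show ⁅h, c⁆ ∈ ⁅(⊤ : Subgroup H).lowerCentralSeries n, ⊤⁆
  rw [Subgroup.commutator_comm]
  exact Subgroup.commutator_mem_commutator (Subgroup.mem_top h) hc

/-- The subgroup of `H × H` of pairs congruent mod `(⊤ : Subgroup H).lowerCentralSeries n`. -/
def congrSubgroup (H : Type*) [Group H] (n : ℕ) : Subgroup (H × H) where
  carrier := {p | p.1 * p.2⁻¹ ∈ (⊤ : Subgroup H).lowerCentralSeries n}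
  one_mem' := by simpa using Subgroup.one_mem _
  mul_mem' := by
    rintro ⟨a₁, a₂⟩ ⟨b₁, b₂⟩ ha hb
    simp only [Set.mem_setOf_eq] at *
    show a₁ * b₁ * (a₂ * b₂)⁻¹ ∈ _
    have : a₁ * b₁ * (a₂ * b₂)⁻¹ = (a₁ * a₂⁻¹) * (a₂ * (b₁ * b₂⁻¹) * a₂⁻¹) := by group
    rw [this]
    exact mul_mem ha (Subgroup.Normal.conj_mem (Subgroup.lowerCentralSeries_normal ⊤ (n)) _ hb a₂)
  inv_mem' := by
    rintro ⟨a₁, a₂⟩ ha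
    simp only [Set.mem_setOf_eq] at *
    show a₁⁻¹ * (a₂⁻¹)⁻¹ ∈ _
    have : a₁⁻¹ * (a₂⁻¹)⁻¹ = a₁⁻¹ * (a₁ * a₂⁻¹)⁻¹ * a₁ := by group
    rw [this]
    exact Subgroup.Normal.conj_mem' (Subgroup.lowerCentralSeries_normal ⊤ (n)) _ (inv_mem ha) a₁

lemma mem_congrSubgroup_iff {H : Type*} [Group H] {n : ℕ} {p : H × H} :
    p ∈ congrSubgroup H n ↔ p.1 * p.2⁻¹ ∈ (⊤ : Subgroup H).lowerCentralSeries n := Iff.rfl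

/-- The difference map `congrSubgroup H n → H ⧸ (⊤ : Subgroup H).lowerCentralSeries (n+1)`. -/
def diffHom (H : Type*) [Group H] (n : ℕ) :
    congrSubgroup H n →* H ⧸ (⊤ : Subgroup H).lowerCentralSeries (n + 1) where
  toFun p := ((p : H × H).1 * (p : H × H).2⁻¹ : H)
  map_one' := by simp; rfl
  map_mul' p q := by
    obtain ⟨⟨a₁, a₂⟩, ha⟩ := p
    obtain ⟨⟨b₁, b₂⟩, hb⟩ := q
    simp only [Subgroup.coe_mul, Prod.fst_mul, Prod.snd_mul]
    rw [← QuotientGroup.mk_mul, eq_comm, QuotientGroup.eq]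
    have key : (a₁ * a₂⁻¹ * (b₁ * b₂⁻¹))⁻¹ * (a₁ * b₁ * (a₂ * b₂)⁻¹) =
        ⁅(b₁ * b₂⁻¹)⁻¹, a₂⁆ := by group
    rw [key]
    exact mem_lcs_succ_left (inv_mem hb) _

/-- Key commutator-calculus lemma: evaluations of an element of the commutator subgroup of a
free group at two pointwise-congruent (mod `γ_n`) families agree mod `γ_{n+1}`. -/
lemma lift_congr_commutator {A : Type*} {H : Type*} [Group H] (n : ℕ) (u₁ u₂ : A → H)
    (hu : ∀ a, u₁ a * (u₂ a)⁻¹ ∈ (⊤ : Subgroup H).lowerCentralSeries n)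
    {x : FreeGroup A} (hx : x ∈ commutator (FreeGroup A)) :
    FreeGroup.lift u₁ x * (FreeGroup.lift u₂ x)⁻¹ ∈ (⊤ : Subgroup H).lowerCentralSeries (n + 1) := by
  have hmem : ∀ y : FreeGroup A,
      (FreeGroup.lift u₁ y, FreeGroup.lift u₂ y) ∈ congrSubgroup H n := by
    intro y
    induction y using FreeGroup.induction_on with
    | C1 => simp only [map_one]; exact one_mem _
    | of a =>
        rw [mem_congrSubgroup_iff]
        show FreeGroup.lift u₁ (FreeGroup.of a) * (FreeGroup.lift u₂ (FreeGroup.of a))⁻¹ ∈ _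
        simpa using hu a
    | inv_of a ih => simp only [map_inv]; exact inv_mem ih
    | mul y z ihy ihz => simp only [map_mul]; exact mul_mem ihy ihz
  let ρ : FreeGroup A →* congrSubgroup H n :=
    ((FreeGroup.lift u₁).prod (FreeGroup.lift u₂)).codRestrict _ hmem
  have hker : commutator (FreeGroup A) ≤ ((diffHom H n).comp ρ).ker := by
    rw [commutator_def, Subgroup.commutator_le]
    intro g₁ _ g₂ _
    rw [MonoidHom.mem_ker, map_commutatorElement]
    have h1 : FreeGroup.lift u₁ g₁ * (FreeGroup.lift u₂ g₁)⁻¹ ∈ (⊤ : Subgroup H).lowerCentralSeries n :=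
      hmem g₁
    have h2 : FreeGroup.lift u₁ g₂ * (FreeGroup.lift u₂ g₂)⁻¹ ∈ (⊤ : Subgroup H).lowerCentralSeries n :=
      hmem g₂
    show ⁅((FreeGroup.lift u₁ g₁ * (FreeGroup.lift u₂ g₁)⁻¹ : H) :
        H ⧸ (⊤ : Subgroup H).lowerCentralSeries (n+1)),
      ((FreeGroup.lift u₁ g₂ * (FreeGroup.lift u₂ g₂)⁻¹ : H) :
        H ⧸ (⊤ : Subgroup H).lowerCentralSeries (n+1))⁆ = 1
    have : ((⁅FreeGroup.lift u₁ g₁ * (FreeGroup.lift u₂ g₁)⁻¹,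
        FreeGroup.lift u₁ g₂ * (FreeGroup.lift u₂ g₂)⁻¹⁆ : H) : H ⧸ (⊤ : Subgroup H).lowerCentralSeries (n+1)) =
        1 := (QuotientGroup.eq_one_iff _).mpr (mem_lcs_succ_left h1 _)
    rw [← this]
    rfl
  have := hker hx
  rw [MonoidHom.mem_ker] at this
  have h2 : ((FreeGroup.lift u₁ x * (FreeGroup.lift u₂ x)⁻¹ : H) :
      H ⧸ (⊤ : Subgroup H).lowerCentralSeries (n+1)) = 1 := this
  rwa [QuotientGroup.eq_one_iff] at h2
open Function

section Helpers

variable {A B K M : Type*}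

lemma hom_lift_comm [Group K] [Group M] (ψ : K →* M) (u : A → K) (x : FreeGroup A) :
    ψ (FreeGroup.lift u x) = FreeGroup.lift (fun a => ψ (u a)) x := by
  have : ψ.comp (FreeGroup.lift u) = FreeGroup.lift (fun a => ψ (u a)) := by
    apply FreeGroup.ext_hom; intro a; simp
  exact DFunLike.congr_fun this x

lemma lift_map_comm [Group K] (u : B → K) (f : A → B) (x : FreeGroup A) :
    FreeGroup.lift u (FreeGroup.map f x) = FreeGroup.lift (fun a => u (f a)) x := by
  have : (FreeGroup.lift u).comp (FreeGroup.map f) = FreeGroup.lift (fun a => u (f a)) := by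
    apply FreeGroup.ext_hom; intro a; simp
  exact DFunLike.congr_fun this x

lemma mem_commutator_map [Group K] [Group M] (f : K →* M) {x : K}
    (hx : x ∈ commutator K) : f x ∈ commutator M := by
  have h : Subgroup.map f (commutator K) ≤ commutator M := by
    rw [commutator_def, Subgroup.map_commutator]
    exact Subgroup.commutator_mono le_top le_top
  exact h (Subgroup.mem_map_of_mem _ hx)

lemma lcs_map_eq [Group K] [Group M] {f : K →* M} (hf : Surjective f) (n : ℕ) :
    Subgroup.map f ((⊤ : Subgroup K).lowerCentralSeries n) = (⊤ : Subgroup M).lowerCentralSeries n := by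
  induction n with
  | zero =>
      simp only [Subgroup.lowerCentralSeries_zero]
      exact Subgroup.map_top_of_surjective f hf
  | succ n ih =>
      show Subgroup.map f ⁅(⊤ : Subgroup K).lowerCentralSeries n, ⊤⁆ = ⁅(⊤ : Subgroup M).lowerCentralSeries n, ⊤⁆
      rw [Subgroup.map_commutator, ih, Subgroup.map_top_of_surjective f hf]

lemma lcs_le_commutator [Group K] {n : ℕ} (hn : 1 ≤ n) :
    (⊤ : Subgroup K).lowerCentralSeries n ≤ commutator K := by
  have := Subgroup.lowerCentralSeries_antitone (⊤ : Subgroup K) hn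
  rwa [Subgroup.top_lowerCentralSeries_one] at this

end Helpers

-- ### given definitions (verbatim)
/-- The canonical presentation map `F(G) → G` from the free group on the underlying set. -/
def presMap (G : Type*) [Group G] : FreeGroup G →* G := FreeGroup.lift id

/-- The relation subgroup `R = ker(F(G) → G)` of the canonical presentation. -/
def presKer (G : Type*) [Group G] : Subgroup (FreeGroup G) := (presMap G).ker

/-- The numerator `R ∩ [F,F]` of Hopf's formula. -/
def hopfNum (G : Type*) [Group G] : Subgroup (FreeGroup G) :=
  commutator (FreeGroup G) ⊓ presKer G

/-- The denominator `[F,R]` of Hopf's formula. -/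
def hopfDen (G : Type*) [Group G] : Subgroup (FreeGroup G) :=
  ⁅(⊤ : Subgroup (FreeGroup G)), presKer G⁆

instance (G : Type*) [Group G] : (hopfDen G).Normal := by
  unfold hopfDen presKer; infer_instance

/-- The second integral homology `H₂(G) = (R ∩ [F,F]) / [F,R]` of a group, via Hopf's
formula applied to the canonical presentation. -/
def H2grp (G : Type*) [Group G] :=
  hopfNum G ⧸ ((hopfDen G).subgroupOf (hopfNum G))

noncomputable instance (G : Type*) [Group G] : Group (H2grp G) := by
  unfold H2grp; infer_instance

lemma presMap_naturality {G H : Type*} [Group G] [Group H] (φ : G →* H)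
    (x : FreeGroup G) : presMap H (FreeGroup.map φ x) = φ (presMap G x) := by
  have : (presMap H).comp (FreeGroup.map φ) = φ.comp (presMap G) := by
    apply FreeGroup.ext_hom
    intro a
    simp [presMap, FreeGroup.map.of, FreeGroup.lift_apply_of]
  exact DFunLike.congr_fun this x

lemma map_mem_hopfNum {G H : Type*} [Group G] [Group H] (φ : G →* H) :
    ∀ x ∈ hopfNum G, FreeGroup.map φ x ∈ hopfNum H := by
  intro x hx
  obtain ⟨h₁, h₂⟩ := hx
  constructor
  · have h3 : Subgroup.map (FreeGroup.map φ) (commutator (FreeGroup G)) ≤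
        commutator (FreeGroup H) := by
      rw [commutator, Subgroup.map_commutator]
      exact Subgroup.commutator_mono le_top le_top
    exact h3 (Subgroup.mem_map_of_mem _ h₁)
  · show FreeGroup.map φ x ∈ (presMap H).ker
    rw [MonoidHom.mem_ker, presMap_naturality]
    rw [show presMap G x = 1 from h₂, map_one]

/-- The restriction of `F(φ) : F(G) → F(H)` to a homomorphism `R∩[F,F] → R∩[F,F]`. -/
def hopfNumMap {G H : Type*} [Group G] [Group H] (φ : G →* H) :
    hopfNum G →* hopfNum H :=
  ((FreeGroup.map φ).domRestrict (hopfNum G)).codRestrict _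
    (fun x => map_mem_hopfNum φ x.1 x.2)

/-- The homomorphism `H₂(G) → H₂(H)` induced by `φ : G → H` (functoriality of Hopf's
formula under the map of canonical presentations induced by `φ`). -/
noncomputable def H2map {G H : Type*} [Group G] [Group H] (φ : G →* H) :
    H2grp G →* H2grp H :=
  QuotientGroup.map _ _ (hopfNumMap φ)
    (by
      intro x hx
      rw [Subgroup.mem_subgroupOf] at hx
      rw [Subgroup.mem_comap, Subgroup.mem_subgroupOf]
      show FreeGroup.map φ (x : FreeGroup G) ∈ hopfDen H
      have h3 : Subgroup.map (FreeGroup.map φ) (hopfDen G) ≤ hopfDen H := by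
        rw [hopfDen, Subgroup.map_commutator]
        apply Subgroup.commutator_mono le_top
        intro y hy
        obtain ⟨z, hz, rfl⟩ := hy
        show FreeGroup.map φ z ∈ (presMap H).ker
        rw [MonoidHom.mem_ker, presMap_naturality]
        rw [show presMap G z = 1 from hz, map_one]
      exact h3 (Subgroup.mem_map_of_mem _ hx))

-- ### more helpers about the canonical presentation

lemma presMap_surjective (G : Type*) [Group G] : Surjective (presMap G) :=
  fun g => ⟨FreeGroup.of g, by simp [presMap]⟩

lemma presMap_of {G : Type*} [Group G] (g : G) : presMap G (FreeGroup.of g) = g := by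
  simp [presMap]

section H2mapLemmas

variable {G H K : Type*} [Group G] [Group H] [Group K]

lemma hopfNumMap_coe (φ : G →* H) (a : hopfNum G) :
    (hopfNumMap φ a : FreeGroup H) = FreeGroup.map φ (a : FreeGroup G) := rfl

lemma H2grp_induction {C : H2grp G → Prop} (ξ : H2grp G)
    (h : ∀ a : hopfNum G, C (QuotientGroup.mk a)) : C ξ :=
  QuotientGroup.induction_on ξ h

lemma H2map_mk (φ : G →* H) (a : hopfNum G) :
    H2map φ (QuotientGroup.mk a) = QuotientGroup.mk (hopfNumMap φ a) := rfl

lemma H2map_comp_apply (φ : G →* H) (ψ : H →* K) (ξ : H2grp G) :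
    H2map ψ (H2map φ ξ) = H2map (ψ.comp φ) ξ := by
  refine H2grp_induction (C := fun ξ => H2map ψ (H2map φ ξ) = H2map (ψ.comp φ) ξ)
    ξ (fun a => ?_)
  show H2map ψ (H2map φ (QuotientGroup.mk a)) = H2map (ψ.comp φ) (QuotientGroup.mk a)
  rw [H2map_mk, H2map_mk, H2map_mk]
  congr 1
  apply Subtype.ext
  rw [hopfNumMap_coe, hopfNumMap_coe, hopfNumMap_coe]
  rw [FreeGroup.map.comp]
  rfl

lemma H2map_id_apply (ξ : H2grp G) : H2map (MonoidHom.id G) ξ = ξ := by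
  refine H2grp_induction (C := fun ξ => H2map (MonoidHom.id G) ξ = ξ) ξ (fun a => ?_)
  show H2map (MonoidHom.id G) (QuotientGroup.mk a) = QuotientGroup.mk a
  rw [H2map_mk]
  congr 1
  apply Subtype.ext
  rw [hopfNumMap_coe]
  show FreeGroup.map id (a : FreeGroup G) = a
  exact FreeGroup.map.id _

lemma H2map_congr {φ ψ : G →* H} (h : φ = ψ) (ξ : H2grp G) : H2map φ ξ = H2map ψ ξ := by
  rw [h]

lemma H2map_bijective_of_mulEquiv (e : G ≃* H) : Bijective (H2map e.toMonoidHom) := by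
  rw [Function.bijective_iff_has_inverse]
  refine ⟨H2map e.symm.toMonoidHom, fun ξ => ?_, fun ξ => ?_⟩
  · rw [H2map_comp_apply]
    rw [H2map_congr (show e.symm.toMonoidHom.comp e.toMonoidHom = MonoidHom.id G by
      ext g; simp) ξ]
    exact H2map_id_apply ξ
  · rw [H2map_comp_apply]
    rw [H2map_congr (show e.toMonoidHom.comp e.symm.toMonoidHom = MonoidHom.id H by
      ext g; simp) ξ]
    exact H2map_id_apply ξ

end H2mapLemmas

section Delta

variable {K : Type*} [Group K] {n : ℕ}

/-- A set-theoretic section of the quotient map `K → K ⧸ N`. -/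
noncomputable def qout {K : Type*} [Group K] (N : Subgroup K) : K ⧸ N → K :=
  Quotient.out

lemma qout_spec {K : Type*} [Group K] (N : Subgroup K) (q : K ⧸ N) :
    QuotientGroup.mk (qout N q) = q :=
  QuotientGroup.out_eq' q

lemma diff_mem_of_mk_eq {N : Subgroup K} [N.Normal] {a b : K} (h : (a : K ⧸ N) = b) :
    a * b⁻¹ ∈ N := by
  have h1 : a⁻¹ * b ∈ N := QuotientGroup.eq.mp h
  have h2 : a * (a⁻¹ * b)⁻¹ * a⁻¹ ∈ N := Subgroup.Normal.conj_mem ‹N.Normal› _ (inv_mem h1) a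
  have : a * (a⁻¹ * b)⁻¹ * a⁻¹ = a * b⁻¹ := by group
  rwa [this] at h2

lemma mk_lift_out (r : FreeGroup (K ⧸ (⊤ : Subgroup K).lowerCentralSeries n)) :
    ((FreeGroup.lift (qout ((⊤ : Subgroup K).lowerCentralSeries n)) r : K) :
      K ⧸ (⊤ : Subgroup K).lowerCentralSeries n) = presMap _ r := by
  have h2 : (QuotientGroup.mk' ((⊤ : Subgroup K).lowerCentralSeries n)).comp
      (FreeGroup.lift (qout ((⊤ : Subgroup K).lowerCentralSeries n))) = presMap (K ⧸ (⊤ : Subgroup K).lowerCentralSeries n) := by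
    apply FreeGroup.ext_hom
    intro a
    simp only [MonoidHom.comp_apply, FreeGroup.lift_apply_of, presMap]
    exact qout_spec _ a
  exact DFunLike.congr_fun h2 r

lemma lift_out_mem_lcs {r : FreeGroup (K ⧸ (⊤ : Subgroup K).lowerCentralSeries n)}
    (hr : r ∈ presKer (K ⧸ (⊤ : Subgroup K).lowerCentralSeries n)) :
    FreeGroup.lift (qout ((⊤ : Subgroup K).lowerCentralSeries n)) r ∈ (⊤ : Subgroup K).lowerCentralSeries n := by
  have h1 := mk_lift_out r
  rw [show presMap _ r = 1 from hr] at h1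
  exact (QuotientGroup.eq_one_iff _).mp h1

lemma lift_out_hopfDen {d : FreeGroup (K ⧸ (⊤ : Subgroup K).lowerCentralSeries n)}
    (hd : d ∈ hopfDen (K ⧸ (⊤ : Subgroup K).lowerCentralSeries n)) :
    FreeGroup.lift (qout ((⊤ : Subgroup K).lowerCentralSeries n)) d ∈ (⊤ : Subgroup K).lowerCentralSeries (n + 1) := by
  have h : hopfDen (K ⧸ (⊤ : Subgroup K).lowerCentralSeries n) ≤
      Subgroup.comap (FreeGroup.lift (qout ((⊤ : Subgroup K).lowerCentralSeries n)))
        ((⊤ : Subgroup K).lowerCentralSeries (n + 1)) := by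
    show ⁅(⊤ : Subgroup _), presKer _⁆ ≤ _
    rw [Subgroup.commutator_le]
    intro a _ r hr
    rw [Subgroup.mem_comap, map_commutatorElement]
    exact mem_lcs_succ_right (lift_out_mem_lcs hr) _
  exact h hd

lemma lift_out_mk_diff {w : FreeGroup K} (hw : w ∈ commutator (FreeGroup K)) :
    FreeGroup.lift (fun a : K => qout ((⊤ : Subgroup K).lowerCentralSeries n) (QuotientGroup.mk a)) w *
      (presMap K w)⁻¹ ∈ (⊤ : Subgroup K).lowerCentralSeries (n + 1) := by
  have h := lift_congr_commutator n
    (fun a : K => qout ((⊤ : Subgroup K).lowerCentralSeries n) (QuotientGroup.mk a)) id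
    (fun a => diff_mem_of_mk_eq (qout_spec _ _)) hw
  exact h

lemma lift_out_map_mk {w : FreeGroup K} (hw : w ∈ hopfNum K) :
    FreeGroup.lift (qout ((⊤ : Subgroup K).lowerCentralSeries n))
      (FreeGroup.map (QuotientGroup.mk : K → K ⧸ (⊤ : Subgroup K).lowerCentralSeries n) w) ∈
      (⊤ : Subgroup K).lowerCentralSeries (n + 1) := by
  rw [lift_map_comm]
  have h := lift_out_mk_diff (n := n) hw.1
  rwa [show presMap K w = 1 from hw.2, inv_one, mul_one] at h

lemma delta_surj (hn : 1 ≤ n) {c : K} (hc : c ∈ (⊤ : Subgroup K).lowerCentralSeries n) :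
    ∃ x : FreeGroup (K ⧸ (⊤ : Subgroup K).lowerCentralSeries n),
      x ∈ hopfNum (K ⧸ (⊤ : Subgroup K).lowerCentralSeries n) ∧
      FreeGroup.lift (qout ((⊤ : Subgroup K).lowerCentralSeries n)) x * c⁻¹ ∈
        (⊤ : Subgroup K).lowerCentralSeries (n + 1) := by
  have hcc : c ∈ commutator K := lcs_le_commutator hn hc
  have hmap : commutator K = Subgroup.map (presMap K) (commutator (FreeGroup K)) := by
    rw [commutator_def, commutator_def, Subgroup.map_commutator,
      Subgroup.map_top_of_surjective _ (presMap_surjective K)]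
  rw [hmap] at hcc
  obtain ⟨x₀, hx₀, hpx₀⟩ := hcc
  refine ⟨FreeGroup.map (QuotientGroup.mk : K → K ⧸ (⊤ : Subgroup K).lowerCentralSeries n) x₀,
    ⟨mem_commutator_map (FreeGroup.map _) hx₀, ?_⟩, ?_⟩
  · show _ ∈ (presMap _).ker
    rw [MonoidHom.mem_ker]
    have h := presMap_naturality (QuotientGroup.mk' ((⊤ : Subgroup K).lowerCentralSeries n)) x₀
    have h2 : FreeGroup.map (⇑(QuotientGroup.mk' ((⊤ : Subgroup K).lowerCentralSeries n))) x₀ =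
        FreeGroup.map (QuotientGroup.mk : K → K ⧸ (⊤ : Subgroup K).lowerCentralSeries n) x₀ := rfl
    rw [h2] at h
    rw [h, hpx₀]
    exact (QuotientGroup.eq_one_iff c).mpr hc
  · rw [lift_map_comm]
    have h := lift_out_mk_diff (n := n) hx₀
    rwa [hpx₀] at h

lemma lcs_quotient_eq_bot :
    (⊤ : Subgroup (K ⧸ (⊤ : Subgroup K).lowerCentralSeries n)).lowerCentralSeries n = ⊥ := by
  rw [← lcs_map_eq (QuotientGroup.mk'_surjective ((⊤ : Subgroup K).lowerCentralSeries n)) n,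
    Subgroup.map_eq_bot_iff, QuotientGroup.ker_mk']

lemma ker_delta_le {x : FreeGroup (K ⧸ (⊤ : Subgroup K).lowerCentralSeries n)}
    (hx : x ∈ hopfNum (K ⧸ (⊤ : Subgroup K).lowerCentralSeries n))
    (hlift : FreeGroup.lift (qout ((⊤ : Subgroup K).lowerCentralSeries n)) x ∈
      (⊤ : Subgroup K).lowerCentralSeries (n + 1)) :
    ∃ z : FreeGroup K, z ∈ hopfNum K ∧
      (FreeGroup.map (QuotientGroup.mk : K → K ⧸ (⊤ : Subgroup K).lowerCentralSeries n) z)⁻¹ * x ∈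
        hopfDen (K ⧸ (⊤ : Subgroup K).lowerCentralSeries n) := by
  set w := FreeGroup.map (qout ((⊤ : Subgroup K).lowerCentralSeries n)) x with hw
  have hw1 : w ∈ commutator (FreeGroup K) := mem_commutator_map (FreeGroup.map _) hx.1
  have hw2 : presMap K w = FreeGroup.lift (qout ((⊤ : Subgroup K).lowerCentralSeries n)) x := by
    show FreeGroup.lift id w = _
    rw [hw, lift_map_comm]
    rfl
  obtain ⟨t, ht, hpt⟩ : ∃ t ∈ (⊤ : Subgroup (FreeGroup K)).lowerCentralSeries (n + 1),
      presMap K t = presMap K w := by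
    have hmem : presMap K w ∈
        Subgroup.map (presMap K) ((⊤ : Subgroup (FreeGroup K)).lowerCentralSeries (n + 1)) := by
      rw [lcs_map_eq (presMap_surjective K) (n + 1), hw2]
      exact hlift
    obtain ⟨t, ht, hpt⟩ := hmem
    exact ⟨t, ht, hpt⟩
  have hmkw : FreeGroup.map (QuotientGroup.mk : K → K ⧸ (⊤ : Subgroup K).lowerCentralSeries n) w = x := by
    rw [hw, FreeGroup.map.comp]
    have heq : ((QuotientGroup.mk : K → K ⧸ (⊤ : Subgroup K).lowerCentralSeries n) ∘
        qout ((⊤ : Subgroup K).lowerCentralSeries n)) = id := by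
      funext q
      exact qout_spec _ q
    rw [heq]
    exact FreeGroup.map.id x
  have hmt : FreeGroup.map (QuotientGroup.mk : K → K ⧸ (⊤ : Subgroup K).lowerCentralSeries n) t ∈
      hopfDen (K ⧸ (⊤ : Subgroup K).lowerCentralSeries n) := by
    have h1 : FreeGroup.map (QuotientGroup.mk : K → K ⧸ (⊤ : Subgroup K).lowerCentralSeries n) t ∈
        (⊤ : Subgroup (FreeGroup (K ⧸ (⊤ : Subgroup K).lowerCentralSeries n))).lowerCentralSeries (n + 1) :=
      Subgroup.lowerCentralSeries.map (FreeGroup.map _) (n + 1) (Subgroup.mem_map_of_mem _ ht)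
    have h2 : (⊤ : Subgroup (FreeGroup (K ⧸ (⊤ : Subgroup K).lowerCentralSeries n))).lowerCentralSeries (n + 1) ≤
        hopfDen (K ⧸ (⊤ : Subgroup K).lowerCentralSeries n) := by
      show ⁅(⊤ : Subgroup _).lowerCentralSeries n, ⊤⁆ ≤ ⁅(⊤ : Subgroup _), presKer _⁆
      rw [Subgroup.commutator_comm]
      apply Subgroup.commutator_mono le_top
      intro y hy
      show y ∈ (presMap _).ker
      rw [MonoidHom.mem_ker]
      have h3 : presMap _ y ∈ (⊤ : Subgroup (K ⧸ (⊤ : Subgroup K).lowerCentralSeries n)).lowerCentralSeries n :=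
        Subgroup.lowerCentralSeries.map (presMap _) n (Subgroup.mem_map_of_mem _ hy)
      rw [lcs_quotient_eq_bot] at h3
      exact h3
    exact h2 h1
  have hcomm : w * t⁻¹ ∈ commutator (FreeGroup K) := by
    have hc2 : t ∈ commutator (FreeGroup K) := lcs_le_commutator (Nat.le_add_left 1 n) ht
    exact mul_mem hw1 (inv_mem hc2)
  refine ⟨w * t⁻¹, ⟨?_, ?_⟩, ?_⟩
  · exact hcomm
  · show presMap K (w * t⁻¹) = 1
    rw [map_mul, map_inv, hpt]
    group
  · have heq : (FreeGroup.map (QuotientGroup.mk : K → K ⧸ (⊤ : Subgroup K).lowerCentralSeries n)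
        (w * t⁻¹))⁻¹ * x =
        FreeGroup.map (QuotientGroup.mk : K → K ⧸ (⊤ : Subgroup K).lowerCentralSeries n) t * (x⁻¹ * x) := by
      rw [map_mul, map_inv, hmkw]
      group
    rw [heq, inv_mul_cancel, mul_one]
    exact hmt

end Delta

section Main

variable {G H : Type*} [Group G] [Group H] (φ : G →* H)

lemma delta_naturality (n : ℕ)
    (pf : (⊤ : Subgroup G).lowerCentralSeries n ≤ Subgroup.comap φ ((⊤ : Subgroup H).lowerCentralSeries n))
    {x : FreeGroup (G ⧸ (⊤ : Subgroup G).lowerCentralSeries n)}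
    (hx : x ∈ commutator (FreeGroup (G ⧸ (⊤ : Subgroup G).lowerCentralSeries n))) :
    FreeGroup.lift (qout ((⊤ : Subgroup H).lowerCentralSeries n))
      (FreeGroup.map
        (QuotientGroup.map ((⊤ : Subgroup G).lowerCentralSeries n) ((⊤ : Subgroup H).lowerCentralSeries n) φ pf) x) *
      (φ (FreeGroup.lift (qout ((⊤ : Subgroup G).lowerCentralSeries n)) x))⁻¹ ∈
      (⊤ : Subgroup H).lowerCentralSeries (n + 1) := by
  rw [lift_map_comm, hom_lift_comm]
  refine lift_congr_commutator n _ _ (fun q => ?_) hx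
  have h1 : (QuotientGroup.mk
      (qout ((⊤ : Subgroup H).lowerCentralSeries n)
        (QuotientGroup.map ((⊤ : Subgroup G).lowerCentralSeries n) ((⊤ : Subgroup H).lowerCentralSeries n) φ pf q)) :
      H ⧸ (⊤ : Subgroup H).lowerCentralSeries n) =
      QuotientGroup.mk (φ (qout ((⊤ : Subgroup G).lowerCentralSeries n) q)) := by
    rw [qout_spec]
    have h2 : (QuotientGroup.mk (φ (qout ((⊤ : Subgroup G).lowerCentralSeries n) q)) :
        H ⧸ (⊤ : Subgroup H).lowerCentralSeries n) =
        QuotientGroup.map ((⊤ : Subgroup G).lowerCentralSeries n) ((⊤ : Subgroup H).lowerCentralSeries n) φ pf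
          (QuotientGroup.mk (qout ((⊤ : Subgroup G).lowerCentralSeries n) q)) := by
      rw [QuotientGroup.map_mk]
    rw [h2, qout_spec]
  exact diff_mem_of_mk_eq h1

/-- Injectivity on the graded pieces (the Stallings diagram chase). -/
lemma gr_injective (n : ℕ) (hn : 1 ≤ n)
    (pf : (⊤ : Subgroup G).lowerCentralSeries n ≤ Subgroup.comap φ ((⊤ : Subgroup H).lowerCentralSeries n))
    (hbij : Function.Bijective
      (H2map (QuotientGroup.map ((⊤ : Subgroup G).lowerCentralSeries n) ((⊤ : Subgroup H).lowerCentralSeries n) φ pf)))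
    (h2 : Function.Surjective (H2map φ))
    {g : G} (hg : g ∈ (⊤ : Subgroup G).lowerCentralSeries n)
    (hφg : φ g ∈ (⊤ : Subgroup H).lowerCentralSeries (n + 1)) : g ∈ (⊤ : Subgroup G).lowerCentralSeries (n + 1) := by
  set ψ : (G ⧸ (⊤ : Subgroup G).lowerCentralSeries n) →* (H ⧸ (⊤ : Subgroup H).lowerCentralSeries n) :=
    QuotientGroup.map ((⊤ : Subgroup G).lowerCentralSeries n) ((⊤ : Subgroup H).lowerCentralSeries n) φ pf with hψ
  obtain ⟨x, hx, hδ⟩ := delta_surj hn hg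
  set A := FreeGroup.lift (qout ((⊤ : Subgroup G).lowerCentralSeries n)) x with hA
  -- A * g⁻¹ ∈ L_{n+1} G
  have hφA : φ A ∈ (⊤ : Subgroup H).lowerCentralSeries (n + 1) := by
    have h1 : φ (A * g⁻¹) ∈ (⊤ : Subgroup H).lowerCentralSeries (n + 1) :=
      (Subgroup.lowerCentralSeries.map φ (n + 1)) (Subgroup.mem_map_of_mem _ hδ)
    have h2 : φ A = φ (A * g⁻¹) * φ g := by rw [← map_mul]; group
    rw [h2]
    exact mul_mem h1 hφg
  have hx' : FreeGroup.map ψ x ∈ hopfNum (H ⧸ (⊤ : Subgroup H).lowerCentralSeries n) :=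
    map_mem_hopfNum ψ x hx
  have hlift' : FreeGroup.lift (qout ((⊤ : Subgroup H).lowerCentralSeries n)) (FreeGroup.map ψ x) ∈
      (⊤ : Subgroup H).lowerCentralSeries (n + 1) := by
    have hnat := delta_naturality φ n pf hx.1
    have h3 : FreeGroup.lift (qout ((⊤ : Subgroup H).lowerCentralSeries n)) (FreeGroup.map ψ x) =
        (FreeGroup.lift (qout ((⊤ : Subgroup H).lowerCentralSeries n)) (FreeGroup.map ψ x) * (φ A)⁻¹) *
          φ A := by group
    rw [h3]
    exact mul_mem hnat hφA
  obtain ⟨z, hz, hzden⟩ := ker_delta_le hx' hlift'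
  -- class equality in H2grp (H ⧸ L n H)
  have hclass : H2map (QuotientGroup.mk' ((⊤ : Subgroup H).lowerCentralSeries n)) (QuotientGroup.mk ⟨z, hz⟩) =
      H2map ψ (QuotientGroup.mk (⟨x, hx⟩ : hopfNum (G ⧸ (⊤ : Subgroup G).lowerCentralSeries n))) := by
    rw [H2map_mk, H2map_mk]
    erw [QuotientGroup.eq]
    rw [Subgroup.mem_subgroupOf]
    show ((hopfNumMap (QuotientGroup.mk' ((⊤ : Subgroup H).lowerCentralSeries n)) ⟨z, hz⟩ :
        hopfNum (H ⧸ (⊤ : Subgroup H).lowerCentralSeries n)) : FreeGroup (H ⧸ (⊤ : Subgroup H).lowerCentralSeries n))⁻¹ *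
        (hopfNumMap ψ ⟨x, hx⟩ : FreeGroup (H ⧸ (⊤ : Subgroup H).lowerCentralSeries n)) ∈ _
    rw [hopfNumMap_coe, hopfNumMap_coe]
    exact hzden
  obtain ⟨ζ, hζ⟩ := h2 (QuotientGroup.mk (⟨z, hz⟩ : hopfNum H))
  obtain ⟨⟨w, hw⟩, rfl⟩ := QuotientGroup.mk_surjective ζ
  -- chain of equalities
  have hcomm : ψ.comp (QuotientGroup.mk' ((⊤ : Subgroup G).lowerCentralSeries n)) =
      (QuotientGroup.mk' ((⊤ : Subgroup H).lowerCentralSeries n)).comp φ := by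
    ext g'
    show ψ (QuotientGroup.mk g') = QuotientGroup.mk (φ g')
    rw [hψ, QuotientGroup.map_mk]
  have hchain : H2map ψ (H2map (QuotientGroup.mk' ((⊤ : Subgroup G).lowerCentralSeries n))
      (QuotientGroup.mk ⟨w, hw⟩)) =
      H2map ψ (QuotientGroup.mk (⟨x, hx⟩ : hopfNum (G ⧸ (⊤ : Subgroup G).lowerCentralSeries n))) := by
    erw [H2map_comp_apply, H2map_congr hcomm, ← H2map_comp_apply, hζ, hclass]
  have hxeq := hbij.1 hchain
  -- extract the hopfDen relation in F(G ⧸ L n G)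
  erw [H2map_mk, QuotientGroup.eq, Subgroup.mem_subgroupOf] at hxeq
  have hden : (FreeGroup.map (QuotientGroup.mk : G → G ⧸ (⊤ : Subgroup G).lowerCentralSeries n) w)⁻¹ * x ∈
      hopfDen (G ⧸ (⊤ : Subgroup G).lowerCentralSeries n) := by
    have hcoe : ((hopfNumMap (QuotientGroup.mk' ((⊤ : Subgroup G).lowerCentralSeries n)) ⟨w, hw⟩ :
        hopfNum (G ⧸ (⊤ : Subgroup G).lowerCentralSeries n)) : FreeGroup (G ⧸ (⊤ : Subgroup G).lowerCentralSeries n)) =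
        FreeGroup.map (QuotientGroup.mk : G → G ⧸ (⊤ : Subgroup G).lowerCentralSeries n) w := rfl
    have := hxeq
    rwa [show (((hopfNumMap (QuotientGroup.mk' ((⊤ : Subgroup G).lowerCentralSeries n)) ⟨w, hw⟩)⁻¹ *
        (⟨x, hx⟩ : hopfNum (G ⧸ (⊤ : Subgroup G).lowerCentralSeries n)) :
        hopfNum (G ⧸ (⊤ : Subgroup G).lowerCentralSeries n)) : FreeGroup (G ⧸ (⊤ : Subgroup G).lowerCentralSeries n)) =
        (FreeGroup.map (QuotientGroup.mk : G → G ⧸ (⊤ : Subgroup G).lowerCentralSeries n) w)⁻¹ * x from rfl]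
        at this
  -- conclude : A ∈ L_{n+1} G
  have hAmem : A ∈ (⊤ : Subgroup G).lowerCentralSeries (n + 1) := by
    have h4 : x = (FreeGroup.map (QuotientGroup.mk : G → G ⧸ (⊤ : Subgroup G).lowerCentralSeries n) w) *
        ((FreeGroup.map (QuotientGroup.mk : G → G ⧸ (⊤ : Subgroup G).lowerCentralSeries n) w)⁻¹ * x) := by
      group
    rw [hA, h4, map_mul]
    exact mul_mem (lift_out_map_mk hw) (lift_out_hopfDen hden)
  have h5 : g = (A * g⁻¹)⁻¹ * A := by group
  rw [h5]
  exact mul_mem (inv_mem hδ) hAmem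

/-- Surjectivity on the graded pieces. -/
lemma gr_surjective (n : ℕ) (hn : 1 ≤ n)
    (pf : (⊤ : Subgroup G).lowerCentralSeries n ≤ Subgroup.comap φ ((⊤ : Subgroup H).lowerCentralSeries n))
    (hsurj : Function.Surjective
      (H2map (QuotientGroup.map ((⊤ : Subgroup G).lowerCentralSeries n) ((⊤ : Subgroup H).lowerCentralSeries n) φ pf)))
    {h' : H} (hh' : h' ∈ (⊤ : Subgroup H).lowerCentralSeries n) :
    ∃ g ∈ (⊤ : Subgroup G).lowerCentralSeries n, φ g * h'⁻¹ ∈ (⊤ : Subgroup H).lowerCentralSeries (n + 1) := by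
  set ψ : (G ⧸ (⊤ : Subgroup G).lowerCentralSeries n) →* (H ⧸ (⊤ : Subgroup H).lowerCentralSeries n) :=
    QuotientGroup.map ((⊤ : Subgroup G).lowerCentralSeries n) ((⊤ : Subgroup H).lowerCentralSeries n) φ pf with hψ
  obtain ⟨x, hx, hδ⟩ := delta_surj hn hh'
  obtain ⟨ξ, hξ⟩ := hsurj (QuotientGroup.mk (⟨x, hx⟩ : hopfNum (H ⧸ (⊤ : Subgroup H).lowerCentralSeries n)))
  obtain ⟨⟨y, hy⟩, rfl⟩ := QuotientGroup.mk_surjective ξ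
  erw [H2map_mk, QuotientGroup.eq, Subgroup.mem_subgroupOf] at hξ
  have hden : (FreeGroup.map ψ y)⁻¹ * x ∈ hopfDen (H ⧸ (⊤ : Subgroup H).lowerCentralSeries n) := by
    rwa [show (((hopfNumMap ψ ⟨y, hy⟩)⁻¹ *
        (⟨x, hx⟩ : hopfNum (H ⧸ (⊤ : Subgroup H).lowerCentralSeries n)) :
        hopfNum (H ⧸ (⊤ : Subgroup H).lowerCentralSeries n)) : FreeGroup (H ⧸ (⊤ : Subgroup H).lowerCentralSeries n)) =
        (FreeGroup.map ψ y)⁻¹ * x from rfl] at hξ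
  set g := FreeGroup.lift (qout ((⊤ : Subgroup G).lowerCentralSeries n)) y with hg
  have hgmem : g ∈ (⊤ : Subgroup G).lowerCentralSeries n := lift_out_mem_lcs hy.2
  refine ⟨g, hgmem, ?_⟩
  set A := FreeGroup.lift (qout ((⊤ : Subgroup H).lowerCentralSeries n)) x with hA
  set B := FreeGroup.lift (qout ((⊤ : Subgroup H).lowerCentralSeries n)) (FreeGroup.map ψ y) with hB
  set D := FreeGroup.lift (qout ((⊤ : Subgroup H).lowerCentralSeries n)) ((FreeGroup.map ψ y)⁻¹ * x) with hD
  have hAD : A = B * D := by rw [hA, hB, hD, ← map_mul]; congr 1; group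
  have hBC : B * (φ g)⁻¹ ∈ (⊤ : Subgroup H).lowerCentralSeries (n + 1) := delta_naturality φ n pf hy.1
  have hDm : D ∈ (⊤ : Subgroup H).lowerCentralSeries (n + 1) := lift_out_hopfDen hden
  have key : φ g * h'⁻¹ = (B * (φ g)⁻¹)⁻¹ * (B * D⁻¹ * B⁻¹) * (A * h'⁻¹) := by
    rw [hAD]; group
  rw [key]
  refine mul_mem (mul_mem (inv_mem hBC) ?_) hδ
  exact Subgroup.Normal.conj_mem (Subgroup.lowerCentralSeries_normal ⊤ (n+1)) _ (inv_mem hDm) B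

end Main

/-- Stallings' theorem: if a group homomorphism `φ : G → H` (induced by a map
of connected CW-complexes on fundamental groups) induces an isomorphism on first homology
(abelianizations) and a surjection on second homology `H₂(G) → H₂(H)`, then for every
`k ≥ 2` it induces an isomorphism of nilpotent quotients `G/G_k ≅ H/H_k`, where `G_k` is the
`k`-th term of the lower central series (`G_k = (⊤ : Subgroup G).lowerCentralSeries (k-1)` in Mathlib's
indexing). -/
theorem stallings_nilpotent_quotients {G H : Type*} [Group G] [Group H] (φ : G →* H)
    (h1 : Function.Bijective (Abelianization.map φ))
    (h2 : Function.Surjective (H2map φ)) :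
    ∀ k : ℕ, 2 ≤ k →
      Function.Bijective
        (QuotientGroup.map ((⊤ : Subgroup G).lowerCentralSeries (k - 1)) ((⊤ : Subgroup H).lowerCentralSeries (k - 1)) φ
          (Subgroup.map_le_iff_le_comap.mp (Subgroup.lowerCentralSeries.map φ (k - 1)))) := by
  have main : ∀ n : ℕ, 1 ≤ n → Function.Bijective
      (QuotientGroup.map ((⊤ : Subgroup G).lowerCentralSeries n) ((⊤ : Subgroup H).lowerCentralSeries n) φ
        (Subgroup.map_le_iff_le_comap.mp (Subgroup.lowerCentralSeries.map φ n))) := by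
    intro n hn
    induction n, hn using Nat.le_induction with
    | base =>
      constructor
      · intro a b hab
        obtain ⟨g₁, rfl⟩ := QuotientGroup.mk_surjective a
        obtain ⟨g₂, rfl⟩ := QuotientGroup.mk_surjective b
        rw [QuotientGroup.map_mk, QuotientGroup.map_mk, QuotientGroup.eq] at hab
        rw [QuotientGroup.eq]
        have hmem : φ (g₁⁻¹ * g₂) ∈ commutator H := by
          rw [map_mul, map_inv]
          rw [show (⊤ : Subgroup H).lowerCentralSeries 1 = commutator H from Subgroup.top_lowerCentralSeries_one] at hab
          exact hab
        have h3 : Abelianization.map φ (Abelianization.of (g₁⁻¹ * g₂)) = 1 := by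
          rw [Abelianization.map_of]
          exact (QuotientGroup.eq_one_iff _).mpr hmem
        have h4 : Abelianization.map φ (Abelianization.of (g₁⁻¹ * g₂)) =
            Abelianization.map φ 1 := by rw [h3, map_one]
        have h5 := h1.1 h4
        have h7 : g₁⁻¹ * g₂ ∈ commutator G := (QuotientGroup.eq_one_iff _).mp h5
        rw [show (⊤ : Subgroup G).lowerCentralSeries 1 = commutator G from Subgroup.top_lowerCentralSeries_one]
        exact h7
      · intro b
        obtain ⟨h, rfl⟩ := QuotientGroup.mk_surjective b
        obtain ⟨a, ha⟩ := h1.2 (Abelianization.of h)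
        obtain ⟨g, rfl⟩ := QuotientGroup.mk_surjective a
        have ha' : Abelianization.map φ (Abelianization.of g) = Abelianization.of h := ha
        rw [Abelianization.map_of] at ha'
        have hmem : (φ g)⁻¹ * h ∈ commutator H := QuotientGroup.eq.mp ha'
        refine ⟨QuotientGroup.mk g, ?_⟩
        rw [QuotientGroup.map_mk, QuotientGroup.eq]
        rw [show (⊤ : Subgroup H).lowerCentralSeries 1 = commutator H from Subgroup.top_lowerCentralSeries_one]
        exact hmem
    | succ n hn ih =>
      have pf : (⊤ : Subgroup G).lowerCentralSeries n ≤ Subgroup.comap φ ((⊤ : Subgroup H).lowerCentralSeries n) :=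
        Subgroup.map_le_iff_le_comap.mp (Subgroup.lowerCentralSeries.map φ n)
      set ψ : (G ⧸ (⊤ : Subgroup G).lowerCentralSeries n) →* (H ⧸ (⊤ : Subgroup H).lowerCentralSeries n) :=
        QuotientGroup.map ((⊤ : Subgroup G).lowerCentralSeries n) ((⊤ : Subgroup H).lowerCentralSeries n) φ pf with hψdef
      have ih' : Function.Bijective ψ := ih
      have hbij : Function.Bijective (H2map ψ) := by
        have he : (MulEquiv.ofBijective ψ ih').toMonoidHom = ψ := by ext x; rfl
        have hb := H2map_bijective_of_mulEquiv (MulEquiv.ofBijective ψ ih')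
        rwa [he] at hb
      constructor
      · intro a b hab
        obtain ⟨g₁, rfl⟩ := QuotientGroup.mk_surjective a
        obtain ⟨g₂, rfl⟩ := QuotientGroup.mk_surjective b
        rw [QuotientGroup.map_mk, QuotientGroup.map_mk, QuotientGroup.eq] at hab
        rw [QuotientGroup.eq]
        have hmem : φ (g₁⁻¹ * g₂) ∈ (⊤ : Subgroup H).lowerCentralSeries (n + 1) := by
          rw [map_mul, map_inv]; exact hab
        have hmem' : g₁⁻¹ * g₂ ∈ (⊤ : Subgroup G).lowerCentralSeries n := by
          have h3 : ψ (QuotientGroup.mk (g₁⁻¹ * g₂)) = 1 := by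
            rw [hψdef, QuotientGroup.map_mk]
            exact (QuotientGroup.eq_one_iff _).mpr
              (Subgroup.lowerCentralSeries_antitone ⊤ (Nat.le_succ n) hmem)
          have h4 : ψ (QuotientGroup.mk (g₁⁻¹ * g₂)) = ψ 1 := by rw [h3, map_one]
          have h5 := ih'.1 h4
          exact (QuotientGroup.eq_one_iff _).mp h5
        exact gr_injective φ n hn pf hbij h2 hmem' hmem
      · intro b
        obtain ⟨hb, rfl⟩ := QuotientGroup.mk_surjective b
        obtain ⟨abar, habar⟩ := ih'.2 (QuotientGroup.mk hb : H ⧸ (⊤ : Subgroup H).lowerCentralSeries n)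
        obtain ⟨g₀, rfl⟩ := QuotientGroup.mk_surjective abar
        rw [hψdef, QuotientGroup.map_mk, QuotientGroup.eq] at habar
        have hh' : hb * (φ g₀)⁻¹ ∈ (⊤ : Subgroup H).lowerCentralSeries n := by
          have hconj : hb * (φ g₀)⁻¹ = hb * ((φ g₀)⁻¹ * hb) * hb⁻¹ := by group
          rw [hconj]
          exact Subgroup.Normal.conj_mem (Subgroup.lowerCentralSeries_normal ⊤ (n)) _ habar hb
        obtain ⟨c, hc, hkey⟩ := gr_surjective φ n hn pf hbij.2 hh'
        refine ⟨QuotientGroup.mk (c * g₀), ?_⟩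
        rw [QuotientGroup.map_mk, QuotientGroup.eq]
        have hid : (φ (c * g₀))⁻¹ * hb =
            (φ (c * g₀))⁻¹ * (φ c * (hb * (φ g₀)⁻¹)⁻¹)⁻¹ * (φ (c * g₀)) := by
          rw [map_mul]; group
        rw [hid]
        exact Subgroup.Normal.conj_mem' (Subgroup.lowerCentralSeries_normal ⊤ (n+1)) _ (inv_mem hkey) _
  intro k hk
  exact main (k - 1) (by omega)
end

section
/- The Magnus expansion, the group homomorphism from the free group F on generators x₁,…,xₙ to the ring of formal power series in non-commuting variables X₁,…,Xₙ sending xᵢ to 1 + Xᵢ, is injective. -/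
open PowerSeries

/-- `1 + Xᵢ` as a unit of the ring `P(n)` of formal power series in the non-commuting
variables `X₁,…,Xₙ` (modelled as power series over the free `ℤ`-algebra on `n` generators,
graded so that the coefficient of `tᵏ` is the degree-`k` homogeneous part). -/
noncomputable def magnusGen (n : ℕ) (i : Fin n) :
    (PowerSeries (FreeAlgebra ℤ (Fin n)))ˣ where
  val := 1 + PowerSeries.C (FreeAlgebra.ι ℤ i) * PowerSeries.X
  inv := PowerSeries.invOfUnit (1 + PowerSeries.C (FreeAlgebra.ι ℤ i) * PowerSeries.X) 1
  val_inv := PowerSeries.mul_invOfUnit _ _ (by simp)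
  inv_val := PowerSeries.invOfUnit_mul _ _ (by simp)

/-- The Magnus expansion: the group homomorphism from the free group on `x₁,…,xₙ` to the
units of `P(n)` sending `xᵢ` to `1 + Xᵢ`. -/
noncomputable def magnus (n : ℕ) :
    FreeGroup (Fin n) →* (PowerSeries (FreeAlgebra ℤ (Fin n)))ˣ :=
  FreeGroup.lift (magnusGen n)

/-! ### Auxiliary matrix combinatorics -/

section MatrixAux

variable {n : ℕ}

private def fk (s k : ℕ) : Fin (s+1) := ⟨k % (s+1), Nat.mod_lt _ (Nat.succ_pos s)⟩

private lemma fk_val {s k : ℕ} (h : k ≤ s) : (fk s k).val = k :=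
  Nat.mod_eq_of_lt (Nat.lt_succ_of_le h)

private def mat (s : ℕ) (jf : ℕ → Fin n) (i : Fin n) : Matrix (Fin (s+1)) (Fin (s+1)) ℤ :=
  Matrix.of fun a b => if b.val = a.val + 1 ∧ jf a.val = i then 1 else 0

private lemma mat_sq {s : ℕ} {jf : ℕ → Fin n} (hj : ∀ a, a + 2 ≤ s → jf a ≠ jf (a+1))
    (i : Fin n) : mat s jf i * mat s jf i = 0 := by
  ext a b
  rw [Matrix.mul_apply]
  refine Finset.sum_eq_zero fun c _ => ?_
  by_cases h1 : c.val = a.val + 1 ∧ jf a.val = i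
  · by_cases h2 : b.val = c.val + 1 ∧ jf c.val = i
    · exfalso
      have hb : a.val + 2 ≤ s := by have := b.isLt; omega
      exact hj a.val hb (by rw [h1.2, ← h1.1]; exact h2.2.symm)
    · simp [mat, h2]
  · simp [mat, h1]

private lemma prod_entry {s : ℕ} {jf : ℕ → Fin n} :
    ∀ (l : List (Fin n × ℤ)) (k : ℕ), k + l.length ≤ s →
      (∀ t (ht : t < l.length), jf (k + t) = (l.get ⟨t, ht⟩).1) →
      ((l.map fun p => p.2 • mat s jf p.1).prod) (fk s k) (fk s (k + l.length))
        = (l.map Prod.snd).prod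
  | [], k, hk, _ => by simp [Matrix.one_apply_eq]
  | p :: l, k, hk, hcompat => by
      have hk1 : k + 1 ≤ s := by simp only [List.length_cons] at hk; omega
      have hkk : k ≤ s := le_trans (Nat.le_succ k) hk1
      rw [List.map_cons, List.prod_cons]
      set B := (l.map fun p => p.2 • mat s jf p.1).prod with hB
      rw [smul_mul_assoc, Matrix.smul_apply]
      have ht2 : (mat s jf p.1 * B) (fk s k) (fk s (k + (p :: l).length))
          = B (fk s (k+1)) (fk s (k + (p :: l).length)) := by
        rw [Matrix.mul_apply]
        rw [Finset.sum_eq_single (fk s (k+1))]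
        · have hcond : ((fk s (k+1)).val = (fk s k).val + 1 ∧ jf (fk s k).val = p.1) := by
            constructor
            · rw [fk_val hk1, fk_val hkk]
            · rw [fk_val hkk]
              have := hcompat 0 (by simp)
              simpa using this
          simp [mat, hcond]
        · intro c _ hc
          have : ¬ (c.val = (fk s k).val + 1 ∧ jf (fk s k).val = p.1) := by
            intro hcon
            apply hc
            apply Fin.ext
            rw [fk_val hk1, hcon.1, fk_val hkk]
          simp [mat, this]
        · intro h; exact absurd (Finset.mem_univ _) h
      have harith : k + (p :: l).length = (k + 1) + l.length := by
        simp only [List.length_cons]; omega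
      have hIH : B (fk s (k+1)) (fk s ((k+1) + l.length)) = (l.map Prod.snd).prod := by
        apply prod_entry l (k+1) (by omega)
        intro t ht
        have := hcompat (t+1) (by simp only [List.length_cons]; omega)
        simpa [Nat.add_assoc, Nat.add_comm 1 t] using this
      rw [ht2, harith, hIH, List.map_cons, List.prod_cons, smul_eq_mul]

end MatrixAux

/-! ### Units of the form `1 + c • A` with `A` square-zero -/

section SqUnit

private lemma sq_smul_zero {R : Type*} [Ring R] {A : R} (hA : A * A = 0) (c : ℤ) :
    (c • A) * (c • A) = 0 := by
  rw [smul_mul_assoc, mul_smul_comm, hA, smul_zero, smul_zero]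

private lemma one_add_mul_one_sub {R : Type*} [Ring R] {A : R} (hA : A * A = 0) :
    (1 + A) * (1 - A) = 1 := by
  have : (1 + A) * (1 - A) = 1 - A * A := by noncomm_ring
  rw [this, hA, sub_zero]

private lemma one_sub_mul_one_add {R : Type*} [Ring R] {A : R} (hA : A * A = 0) :
    (1 - A) * (1 + A) = 1 := by
  have : (1 - A) * (1 + A) = 1 - A * A := by noncomm_ring
  rw [this, hA, sub_zero]

/-- the unit `1 + c • A` for square-zero `A` -/
private def sqUnit {R : Type*} [Ring R] (A : R) (hA : A * A = 0) (c : ℤ) : Rˣ where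
  val := 1 + c • A
  inv := 1 - c • A
  val_inv := one_add_mul_one_sub (sq_smul_zero hA c)
  inv_val := one_sub_mul_one_add (sq_smul_zero hA c)

private lemma sqUnit_pow {R : Type*} [Ring R] (A : R) (hA : A * A = 0) :
    ∀ k : ℕ, (sqUnit A hA 1) ^ k = sqUnit A hA k
  | 0 => by ext; simp [sqUnit]
  | k + 1 => by
      ext
      rw [pow_succ, sqUnit_pow A hA k]
      show (1 + (k : ℤ) • A) * (1 + (1 : ℤ) • A) = 1 + ((k : ℤ) + 1) • A
      rw [one_smul, add_smul, one_smul, zsmul_eq_mul, mul_one_add, one_add_mul,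
        mul_assoc, hA, mul_zero, add_zero, ← zsmul_eq_mul]
      abel

private lemma sqUnit_zpow {R : Type*} [Ring R] (A : R) (hA : A * A = 0) :
    ∀ m : ℤ, ((sqUnit A hA 1) ^ m : Rˣ).val = 1 + m • A := by
  intro m
  cases m with
  | ofNat k => rw [Int.ofNat_eq_coe, zpow_natCast, sqUnit_pow A hA k]; rfl
  | negSucc k =>
      rw [zpow_negSucc, sqUnit_pow A hA (k+1)]
      show (1 : R) - ((k : ℤ) + 1) • A = 1 + (Int.negSucc k) • A
      rw [Int.negSucc_eq, neg_smul, sub_eq_add_neg]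

end SqUnit

/-! ### Coefficient of a product of power series `1 + C Aₜ * X` -/

section CoeffProd

private lemma coeff_prod_one_add {R : Type*} [Ring R] :
    ∀ L : List R,
      (∀ k, L.length < k →
        PowerSeries.coeff k
          ((L.map fun A => 1 + PowerSeries.C A * PowerSeries.X).prod) = 0) ∧
      PowerSeries.coeff L.length
          ((L.map fun A => 1 + PowerSeries.C A * PowerSeries.X).prod) = L.prod
  | [] => by
      constructor
      · intro k hk
        simp only [List.map_nil, List.prod_nil]
        rw [PowerSeries.coeff_one, if_neg (by omega)]
      · simp only [List.map_nil, List.prod_nil, List.length_nil]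
        rw [PowerSeries.coeff_one, if_pos rfl]
  | A :: L => by
      obtain ⟨ih0, ih1⟩ := coeff_prod_one_add L
      have hexp : ((A :: L).map fun B => 1 + PowerSeries.C B * PowerSeries.X).prod
          = ((L.map fun B => 1 + PowerSeries.C B * PowerSeries.X).prod)
            + PowerSeries.C A * (PowerSeries.X *
              ((L.map fun B => 1 + PowerSeries.C B * PowerSeries.X).prod)) := by
        rw [List.map_cons, List.prod_cons, add_mul, one_mul, mul_assoc]
      constructor
      · intro k hk
        simp only [List.length_cons] at hk
        obtain ⟨k', rfl⟩ : ∃ k', k = k' + 1 := ⟨k - 1, by omega⟩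
        rw [hexp, map_add, PowerSeries.coeff_C_mul, PowerSeries.coeff_succ_X_mul,
          ih0 _ (by omega), ih0 _ (by omega), mul_zero, add_zero]
      · rw [hexp]
        show PowerSeries.coeff (L.length + 1) _ = _
        rw [map_add, PowerSeries.coeff_C_mul, PowerSeries.coeff_succ_X_mul,
          ih0 _ (by omega), ih1, zero_add, List.prod_cons]

end CoeffProd

/-! ### Block decompositions in the free group -/

section MagnusBlocks

variable {n : ℕ}

private def prodOf (l : List (Fin n × ℤ)) : FreeGroup (Fin n) :=
  (l.map fun p => FreeGroup.of p.1 ^ p.2).prod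

private def Ok (l : List (Fin n × ℤ)) : Prop :=
  (∀ p ∈ l, p.2 ≠ 0) ∧ l.Chain' fun p q => p.1 ≠ q.1

private lemma prodOf_cons (p : Fin n × ℤ) (l : List (Fin n × ℤ)) :
    prodOf (p :: l) = FreeGroup.of p.1 ^ p.2 * prodOf l := by
  rw [prodOf, List.map_cons, List.prod_cons]; rfl

private lemma blocks_step (i : Fin n) (e : ℤ) (he : e ≠ 0) (l : List (Fin n × ℤ))
    (hl : Ok l) (hne : l ≠ []) :
    (FreeGroup.of i ^ e * prodOf l = 1) ∨
      ∃ l', Ok l' ∧ l' ≠ [] ∧ FreeGroup.of i ^ e * prodOf l = prodOf l' := by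
  match l, hne with
  | ⟨p1, p2⟩ :: t, _ =>
    set p : Fin n × ℤ := ⟨p1, p2⟩ with hp
    by_cases hip : i = p1
    · subst hip
      have hmerge : FreeGroup.of i ^ e * prodOf ((i, p2) :: t)
          = FreeGroup.of i ^ (e + p2) * prodOf t := by
        rw [prodOf_cons, ← mul_assoc, ← zpow_add]
      by_cases hz : e + p2 = 0
      · rw [hp, hmerge, hz, zpow_zero, one_mul]
        match t with
        | [] => left; simp [prodOf]
        | q :: t' =>
          right
          exact ⟨q :: t', ⟨fun x hx => hl.1 x (List.mem_cons_of_mem _ hx), hl.2.tail⟩,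
            List.cons_ne_nil _ _, rfl⟩
      · right
        refine ⟨(i, e + p2) :: t, ⟨?_, ?_⟩, List.cons_ne_nil _ _, ?_⟩
        · intro x hx
          rcases List.mem_cons.mp hx with h | h
          · rw [h]; exact hz
          · exact hl.1 x (List.mem_cons_of_mem _ h)
        · rcases List.isChain_cons.mp hl.2 with ⟨hhead, htail⟩
          exact List.isChain_cons.mpr ⟨fun b hb => hhead b hb, htail⟩
        · rw [hp, hmerge, prodOf_cons]
    · right
      refine ⟨(i, e) :: p :: t, ⟨?_, ?_⟩, List.cons_ne_nil _ _, ?_⟩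
      · intro x hx
        rcases List.mem_cons.mp hx with h | h
        · rw [h]; exact he
        · exact hl.1 x h
      · exact List.isChain_cons_cons.mpr ⟨hip, hl.2⟩
      · simp [prodOf_cons, mul_assoc]

private lemma exists_blocks (g : FreeGroup (Fin n)) :
    g = 1 ∨ ∃ l, Ok l ∧ l ≠ [] ∧ g = prodOf l := by
  rw [← FreeGroup.mk_toWord (x := g)]
  generalize g.toWord = L
  induction L with
  | nil => left; rfl
  | cons x L ih =>
    have hsplit : FreeGroup.mk (x :: L)
        = FreeGroup.of x.1 ^ (if x.2 then (1 : ℤ) else -1) * FreeGroup.mk L := by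
      have h1 : FreeGroup.mk [x] * FreeGroup.mk L = FreeGroup.mk (x :: L) :=
        FreeGroup.mul_mk
      rw [← h1]
      congr 1
      rcases x with ⟨i, b⟩
      cases b
      · show FreeGroup.mk [(i, false)] = FreeGroup.of i ^ (-1 : ℤ)
        rw [zpow_neg_one]
        have : (FreeGroup.of i : FreeGroup (Fin n))⁻¹
            = FreeGroup.mk (FreeGroup.invRev [(i, true)]) := FreeGroup.inv_mk
        rw [this]
        simp [FreeGroup.invRev]
      · show FreeGroup.mk [(i, true)] = FreeGroup.of i ^ (1 : ℤ)
        rw [zpow_one]; rfl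
    have he : (if x.2 then (1 : ℤ) else -1) ≠ 0 := by
      cases x.2 <;> simp
    rcases ih with h1 | ⟨l, hOk, hne, heq⟩
    · right
      refine ⟨[(x.1, if x.2 then (1 : ℤ) else -1)], ⟨?_, List.isChain_singleton _⟩,
        List.cons_ne_nil _ _, ?_⟩
      · intro p hp
        rcases List.mem_cons.mp hp with h | h
        · rw [h]; exact he
        · simp at h
      · rw [hsplit, h1, mul_one, prodOf_cons, prodOf, List.map_nil, List.prod_nil, mul_one]
    · rw [hsplit, heq]
      exact blocks_step _ _ he l hOk hne

end MagnusBlocks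

/-! ### The main argument: `magnus` is nontrivial on block words -/

set_option maxHeartbeats 1000000 in
private lemma magnus_prodOf_ne_one {n : ℕ} (l : List (Fin n × ℤ)) (hOk : Ok l) (hne : l ≠ []) :
    magnus n (prodOf l) ≠ 1 := by
  intro hg
  set s := l.length with hs
  set jf : ℕ → Fin n := fun t => (l.getD t (l.head hne)).1 with hjfdef
  have hjf : ∀ t (ht : t < l.length), jf t = (l.get ⟨t, ht⟩).1 := by
    intro t ht
    rw [hjfdef]
    simp only [List.getD_eq_getElem _ _ ht, List.get_eq_getElem]
  have hj2 : ∀ a, a + 2 ≤ s → jf a ≠ jf (a + 1) := by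
    intro a ha
    have hchain := List.isChain_iff_getElem.mp hOk.2 a (by omega)
    rw [hjf a (by omega), hjf (a+1) (by omega)]
    exact hchain
  have hNsq : ∀ i, mat s jf i * mat s jf i = 0 := mat_sq hj2
  set φ : FreeAlgebra ℤ (Fin n) →ₐ[ℤ] Matrix (Fin (s+1)) (Fin (s+1)) ℤ :=
    FreeAlgebra.lift ℤ (mat s jf) with hφ
  set R := Matrix (Fin (s+1)) (Fin (s+1)) ℤ with hR
  have hCX : ∀ i : Fin n,
      (PowerSeries.C (mat s jf i) * PowerSeries.X) *
        (PowerSeries.C (mat s jf i) * PowerSeries.X) = 0 := by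
    intro i
    have h1 : (PowerSeries.C (mat s jf i) * PowerSeries.X) *
        (PowerSeries.C (mat s jf i) * PowerSeries.X)
        = PowerSeries.C (mat s jf i * mat s jf i)
            * (PowerSeries.X * PowerSeries.X) := by
      rw [map_mul]
      rw [mul_assoc, ← mul_assoc PowerSeries.X (PowerSeries.C (mat s jf i)) PowerSeries.X,
        (PowerSeries.commute_X (PowerSeries.C (mat s jf i))).symm.eq]
      noncomm_ring
    rw [h1, hNsq i, map_zero, zero_mul]
  set ν : FreeGroup (Fin n) →* (PowerSeries R)ˣ :=
    (Units.map (PowerSeries.map φ.toRingHom).toMonoidHom).comp (magnus n) with hν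
  have hνof : ∀ j : Fin n,
      ν (FreeGroup.of j) = sqUnit (PowerSeries.C (mat s jf j) * PowerSeries.X) (hCX j) 1 := by
    intro j
    apply Units.ext
    rw [hν]
    simp only [MonoidHom.comp_apply]
    rw [Units.coe_map]
    rw [show magnus n (FreeGroup.of j) = magnusGen n j from FreeGroup.lift_apply_of]
    show PowerSeries.map φ.toRingHom
        (1 + PowerSeries.C (FreeAlgebra.ι ℤ j) * PowerSeries.X)
      = 1 + (1 : ℤ) • (PowerSeries.C (mat s jf j) * PowerSeries.X)
    have hphi : φ.toRingHom (FreeAlgebra.ι ℤ j) = mat s jf j := by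
      rw [hφ]; exact FreeAlgebra.lift_ι_apply _ _
    rw [one_smul, map_add, map_one, map_mul, PowerSeries.map_C, PowerSeries.map_X, hphi]
  set Vv : FreeGroup (Fin n) →* PowerSeries R := (Units.coeHom (PowerSeries R)).comp ν with hVv
  have hVone : Vv (prodOf l) = 1 := by
    rw [hVv]
    simp only [MonoidHom.comp_apply]
    rw [hν]
    simp only [MonoidHom.comp_apply]
    rw [hg]
    simp
  have hVof : ∀ (j : Fin n) (m : ℤ),
      Vv (FreeGroup.of j ^ m) = 1 + PowerSeries.C (m • mat s jf j) * PowerSeries.X := by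
    intro j m
    rw [hVv]
    simp only [MonoidHom.comp_apply]
    rw [map_zpow, hνof j]
    show ((sqUnit _ (hCX j) 1 ^ m :(PowerSeries R)ˣ) : PowerSeries R) = _
    rw [sqUnit_zpow _ (hCX j) m]
    rw [map_zsmul, smul_mul_assoc]
  have hprod : Vv (prodOf l)
      = (((l.map fun p => p.2 • mat s jf p.1).map
          fun A => 1 + PowerSeries.C A * PowerSeries.X).prod) := by
    rw [prodOf, map_list_prod, List.map_map, List.map_map]
    congr 1
    apply List.map_congr_left
    intro p _
    exact hVof p.1 p.2
  -- take the coefficient of `X ^ s`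
  have hcoeff := (coeff_prod_one_add (l.map fun p => p.2 • mat s jf p.1)).2
  rw [List.length_map, ← hs, ← hprod, hVone] at hcoeff
  rw [PowerSeries.coeff_one] at hcoeff
  rw [if_neg (show ¬ s = 0 by
    have : 0 < s := List.length_pos_iff.mpr hne
    omega)] at hcoeff
  -- now the matrix product is zero; compare the `(0, s)` entry
  have hmain := prod_entry (s := s) (jf := jf) l 0 (by omega) (fun t ht => by
    rw [Nat.zero_add]; exact hjf t ht)
  have hzero : (((l.map fun p => p.2 • mat s jf p.1).prod) : R) = 0 := hcoeff.symm
  have h0 : ((l.map fun p => p.2 • mat s jf p.1).prod) (fk s 0) (fk s (0 + l.length)) = 0 := by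
    have := congrArg (fun M : R => M (fk s 0) (fk s (0 + l.length))) hzero
    simpa using this
  rw [hmain] at h0
  have hnz : (l.map Prod.snd).prod ≠ 0 := by
    apply List.prod_ne_zero
    intro h0
    obtain ⟨p, hp, hp2⟩ := List.mem_map.mp h0
    exact hOk.1 p hp hp2
  exact hnz h0

/-- the Magnus expansion, i.e. the group homomorphism from the free group `F` on
`x₁,…,xₙ` to the ring of formal power series in the non-commuting variables `X₁,…,Xₙ`
sending `xᵢ` to `1 + Xᵢ`, is injective. -/
theorem magnus_injective (n : ℕ) :
    (∀ i : Fin n, ((magnus n (FreeGroup.of i) : (PowerSeries (FreeAlgebra ℤ (Fin n)))ˣ) :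
        PowerSeries (FreeAlgebra ℤ (Fin n))) =
      1 + PowerSeries.C (FreeAlgebra.ι ℤ i) * PowerSeries.X) ∧
    Function.Injective (magnus n) := by
  constructor
  · intro i
    rw [show magnus n (FreeGroup.of i) = magnusGen n i from FreeGroup.lift_apply_of]
    rfl
  · rw [injective_iff_map_eq_one]
    intro g hg
    rcases exists_blocks g with h | ⟨l, hOk, hne, rfl⟩
    · exact h
    · exact absurd hg (magnus_prodOf_ne_one l hOk hne)
end

section
/- For any element w of the k-th term F_k of the lower central series of the free group F, the Magnus expansion of w has the form 1 + (terms of degree ≥ k); that is, all homogeneous components of degree 1, …, k−1 of μ(w) − 1 vanish. -/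
open PowerSeries
open scoped commutatorElement

section Aux

variable {R : Type*} [Ring R]

lemma coeff_mul_zero_left (f g : PowerSeries R) (m : ℕ)
    (hf : ∀ j ≤ m, PowerSeries.coeff j f = 0) :
    ∀ j ≤ m, PowerSeries.coeff j (f * g) = 0 := by
  intro j hj
  rw [PowerSeries.coeff_mul]
  apply Finset.sum_eq_zero
  intro p hp
  rw [Finset.HasAntidiagonal.mem_antidiagonal] at hp
  rw [hf p.1 (le_trans (hp ▸ Nat.le_add_right _ _) hj), zero_mul]

lemma coeff_mul_zero_right (f g : PowerSeries R) (m : ℕ)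
    (hg : ∀ j ≤ m, PowerSeries.coeff j g = 0) :
    ∀ j ≤ m, PowerSeries.coeff j (f * g) = 0 := by
  intro j hj
  rw [PowerSeries.coeff_mul]
  apply Finset.sum_eq_zero
  intro p hp
  rw [Finset.HasAntidiagonal.mem_antidiagonal] at hp
  rw [hg p.2 (le_trans (hp ▸ Nat.le_add_left _ _) hj), mul_zero]

end Aux

/-- The filtration subgroup: units congruent to `1` modulo degree `> m`. -/
noncomputable def magnusFilt (n m : ℕ) : Subgroup (PowerSeries (FreeAlgebra ℤ (Fin n)))ˣ where
  carrier := {u | ∀ j ≤ m, PowerSeries.coeff j ((u : PowerSeries (FreeAlgebra ℤ (Fin n))) - 1) = 0}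
  one_mem' := by intro j hj; simp
  mul_mem' := by
    intro u v hu hv j hj
    have key : ((u * v : _ˣ) : PowerSeries (FreeAlgebra ℤ (Fin n))) - 1
        = ((u : PowerSeries (FreeAlgebra ℤ (Fin n))) - 1) * ((v : PowerSeries _) - 1)
          + ((u : PowerSeries _) - 1) + ((v : PowerSeries _) - 1) := by
      rw [Units.val_mul]
      noncomm_ring
    rw [key, map_add, map_add,
      coeff_mul_zero_left _ _ m hu j hj, hu j hj, hv j hj]
    simp
  inv_mem' := by
    intro u hu j hj
    have key : ((u⁻¹ : _ˣ) : PowerSeries (FreeAlgebra ℤ (Fin n))) - 1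
        = -(((u⁻¹ : _ˣ) : PowerSeries (FreeAlgebra ℤ (Fin n))) * ((u : PowerSeries _) - 1)) := by
      rw [mul_sub, Units.inv_mul, mul_one]
      noncomm_ring
    rw [key, map_neg, coeff_mul_zero_right _ _ m hu j hj, neg_zero]

lemma commutator_mem_magnusFilt (n m : ℕ) (u v : (PowerSeries (FreeAlgebra ℤ (Fin n)))ˣ)
    (hu : u ∈ magnusFilt n m) (hv : v ∈ magnusFilt n 0) :
    ⁅u, v⁆ ∈ magnusFilt n (m + 1) := by
  let U : PowerSeries (FreeAlgebra ℤ (Fin n)) := u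
  let V : PowerSeries (FreeAlgebra ℤ (Fin n)) := v
  have hs : ∀ j ≤ m + 1, PowerSeries.coeff j (U * V - V * U) = 0 := by
    intro j hj
    have key : U * V - V * U = (U - 1) * (V - 1) - (V - 1) * (U - 1) := by noncomm_ring
    rw [key, map_sub]
    have h1 : PowerSeries.coeff j ((U - 1) * (V - 1)) = 0 := by
      rw [PowerSeries.coeff_mul]
      apply Finset.sum_eq_zero
      intro p hp
      rw [Finset.HasAntidiagonal.mem_antidiagonal] at hp
      rcases Nat.eq_zero_or_pos p.2 with h2 | h2
      · rw [h2, hv 0 le_rfl, mul_zero]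
      · have : p.1 ≤ m := by omega
        rw [hu p.1 this, zero_mul]
    have h2 : PowerSeries.coeff j ((V - 1) * (U - 1)) = 0 := by
      rw [PowerSeries.coeff_mul]
      apply Finset.sum_eq_zero
      intro p hp
      rw [Finset.HasAntidiagonal.mem_antidiagonal] at hp
      rcases Nat.eq_zero_or_pos p.1 with h1' | h1'
      · rw [h1', hv 0 le_rfl, zero_mul]
      · have : p.2 ≤ m := by omega
        rw [hu p.2 this, mul_zero]
    rw [h1, h2, sub_zero]
  intro j hj
  have key : ((⁅u, v⁆ : (PowerSeries (FreeAlgebra ℤ (Fin n)))ˣ) :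
        PowerSeries (FreeAlgebra ℤ (Fin n))) - 1
      = (U * V - V * U) * ((u⁻¹ : _ˣ) : PowerSeries (FreeAlgebra ℤ (Fin n)))
          * ((v⁻¹ : _ˣ) : PowerSeries (FreeAlgebra ℤ (Fin n))) := by
    have huu : V * U * ((u⁻¹ : _ˣ) : PowerSeries (FreeAlgebra ℤ (Fin n)))
        * ((v⁻¹ : _ˣ) : PowerSeries (FreeAlgebra ℤ (Fin n))) = 1 := by
      rw [mul_assoc V U, Units.mul_inv, mul_one, Units.mul_inv]
    have hcv : ((⁅u, v⁆ : (PowerSeries (FreeAlgebra ℤ (Fin n)))ˣ) :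
          PowerSeries (FreeAlgebra ℤ (Fin n)))
        = U * V * ((u⁻¹ : _ˣ) : PowerSeries (FreeAlgebra ℤ (Fin n)))
          * ((v⁻¹ : _ˣ) : PowerSeries (FreeAlgebra ℤ (Fin n))) := by
      rw [commutatorElement_def, Units.val_mul, Units.val_mul, Units.val_mul]
    rw [hcv, ← huu]
    noncomm_ring
  rw [key]
  exact coeff_mul_zero_left _ _ (m + 1)
    (coeff_mul_zero_left _ _ (m + 1) hs) j hj

lemma magnus_mem_filt_zero (n : ℕ) (w : FreeGroup (Fin n)) :
    magnus n w ∈ magnusFilt n 0 := by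
  have : w ∈ (magnusFilt n 0).comap (magnus n) := by
    induction w using FreeGroup.induction_on with
    | C1 => exact Subgroup.one_mem _
    | of i =>
      intro j hj
      interval_cases j
      have h : magnus n (FreeGroup.of i) = magnusGen n i := FreeGroup.lift_apply_of
      show PowerSeries.coeff 0 (((magnus n (FreeGroup.of i) : _ˣ) :
        PowerSeries (FreeAlgebra ℤ (Fin n))) - 1) = 0
      simp [h, magnusGen, PowerSeries.coeff_mul]
    | inv_of i h => exact Subgroup.inv_mem _ h
    | mul x y hx hy => exact Subgroup.mul_mem _ hx hy
  exact this

lemma lcs_le_magnusFilt (n m : ℕ) :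
    Subgroup.lowerCentralSeries (⊤ : Subgroup (FreeGroup (Fin n))) m ≤ (magnusFilt n m).comap (magnus n) := by
  induction m with
  | zero => intro w _; exact magnus_mem_filt_zero n w
  | succ m ih =>
    rw [Subgroup.lowerCentralSeries_succ]
    apply Subgroup.commutator_le.2
    intro g hg h _
    have h1 : magnus n g ∈ magnusFilt n m := ih hg
    have h2 : magnus n h ∈ magnusFilt n 0 := magnus_mem_filt_zero n h
    show magnus n ⁅g, h⁆ ∈ magnusFilt n (m + 1)
    rw [map_commutatorElement]
    exact commutator_mem_magnusFilt n m _ _ h1 h2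

/-- for any element `w` of the `k`-th term `F_k` of the lower central series of
the free group `F` (here `F_k` is `lowerCentralSeries F (m-1)` in Mathlib's indexing, so
`w ∈ lowerCentralSeries F m` means `w ∈ F_{m+1}`), the Magnus expansion of `w` has the form
`1 + (terms of degree ≥ k)`: all homogeneous components of degree `1, …, k−1` of `μ(w) − 1`
vanish. -/
theorem magnus_of_lowerCentralSeries (n m : ℕ) (w : FreeGroup (Fin n))
    (hw : w ∈ Subgroup.lowerCentralSeries (⊤ : Subgroup (FreeGroup (Fin n))) m) :
    ∀ j : ℕ, 1 ≤ j → j ≤ m →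
      PowerSeries.coeff j
        (((magnus n w : (PowerSeries (FreeAlgebra ℤ (Fin n)))ˣ) :
          PowerSeries (FreeAlgebra ℤ (Fin n))) - 1) = 0 := by
  intro j _ hj
  exact lcs_le_magnusFilt n m hw j hj
end

section
/- Let q : V → ℤ/2 be a quadratic form on a finite-dimensional ℤ/2-vector space V whose associated bilinear form b(x,y) = q(x+y) + q(x) + q(y) is nondegenerate symplectic, and let (a₁,b₁,…,a_g,b_g) be a symplectic basis. Then the Arf invariant Arf(q) = Σᵢ q(aᵢ)q(bᵢ) is independent of the choice of symplectic basis. -/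
/-- The sign character `ZMod 2 → ℤ`. -/
private def arfChi (a : ZMod 2) : ℤ := (-1) ^ a.val

private lemma arfChi_add (a b : ZMod 2) : arfChi (a + b) = arfChi a * arfChi b := by
  revert a b; decide

private lemma arfChi_sum {ι : Type*} (s : Finset ι) (f : ι → ZMod 2) :
    arfChi (∑ i ∈ s, f i) = ∏ i ∈ s, arfChi (f i) := by
  classical
  induction s using Finset.cons_induction with
  | empty => simp [arfChi]
  | cons a s ha ih => rw [Finset.sum_cons, Finset.prod_cons, arfChi_add, ih]

private lemma arfChi_inner_sum (α β : ZMod 2) :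
    ∑ cd : ZMod 2 × ZMod 2, arfChi (cd.1 * α + cd.2 * β + cd.1 * cd.2)
      = 2 * arfChi (α * β) := by
  revert α β; decide

section Gauss

variable {V : Type*} [AddCommGroup V] [Module (ZMod 2) V]
    (B : V →ₗ[ZMod 2] V →ₗ[ZMod 2] ZMod 2) (q : V → ZMod 2)
    (hq : ∀ x y : V, q (x + y) = q x + q y + B x y)

include hq

private lemma arf_q_zero : q 0 = 0 := by
  have h := hq 0 0
  simp only [add_zero, map_zero, LinearMap.zero_apply] at h
  linear_combination -h

private lemma arf_B_symm (x y : V) : B x y = B y x := by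
  have h3 : q x + q y + B x y = q y + q x + B y x := by
    rw [← hq x y, ← hq y x, add_comm y x]
  rw [add_comm (q y) (q x)] at h3
  exact add_left_cancel h3

private lemma arf_q_smul (c : ZMod 2) (v : V) : q (c • v) = c * q v := by
  have : c = 0 ∨ c = 1 := by revert c; decide
  rcases this with rfl | rfl
  · simpa using arf_q_zero B q hq
  · simp

private lemma arf_q_sum {ι : Type*} (s : Finset ι) (u : ι → V)
    (horth : ∀ i ∈ s, ∀ j ∈ s, i ≠ j → B (u i) (u j) = 0) :
    q (∑ i ∈ s, u i) = ∑ i ∈ s, q (u i) := by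
  classical
  induction s using Finset.cons_induction with
  | empty => simpa using arf_q_zero B q hq
  | cons a s ha ih =>
    rw [Finset.sum_cons, Finset.sum_cons, hq]
    rw [ih (fun i hi j hj hij => horth i (Finset.mem_cons_of_mem hi) j
      (Finset.mem_cons_of_mem hj) hij)]
    have hB : B (u a) (∑ i ∈ s, u i) = 0 := by
      rw [map_sum]
      refine Finset.sum_eq_zero fun j hj => ?_
      exact horth a (Finset.mem_cons_self a s) j (Finset.mem_cons_of_mem hj)
        (fun h => ha (h ▸ hj))
    rw [hB, add_zero]

/-- Gauss sum computation for a symplectic basis. -/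
private lemma arf_gauss {g : ℕ} [Fintype V]
    (β : Module.Basis (Fin g ⊕ Fin g) (ZMod 2) V)
    (hβaa : ∀ i j, B (β (Sum.inl i)) (β (Sum.inl j)) = 0)
    (hβbb : ∀ i j, B (β (Sum.inr i)) (β (Sum.inr j)) = 0)
    (hβab : ∀ i j, B (β (Sum.inl i)) (β (Sum.inr j)) = if i = j then 1 else 0) :
    ∑ x : V, arfChi (q x)
      = 2 ^ g * arfChi (∑ i : Fin g, q (β (Sum.inl i)) * q (β (Sum.inr i))) := by
  classical
  set a : Fin g → V := fun i => β (Sum.inl i) with ha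
  set b : Fin g → V := fun i => β (Sum.inr i) with hb
  -- the equivalence (Fin g → ZMod 2 × ZMod 2) ≃ V
  let φ : (Fin g → ZMod 2 × ZMod 2) ≃ (Fin g ⊕ Fin g → ZMod 2) :=
    { toFun := fun p => Sum.elim (fun i => (p i).1) (fun i => (p i).2)
      invFun := fun f i => (f (Sum.inl i), f (Sum.inr i))
      left_inv := fun p => rfl
      right_inv := fun f => by funext j; cases j <;> rfl }
  let E : (Fin g → ZMod 2 × ZMod 2) ≃ V := φ.trans β.equivFun.toEquiv.symm
  have key : ∀ p : Fin g → ZMod 2 × ZMod 2,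
      q (E p) = ∑ i : Fin g, ((p i).1 * q (a i) + (p i).2 * q (b i) + (p i).1 * (p i).2) := by
    intro p
    have hE : E p = ∑ i : Fin g, ((p i).1 • a i + (p i).2 • b i) := by
      show β.equivFun.symm (φ p) = _
      rw [Module.Basis.equivFun_symm_apply, Fintype.sum_sum_type, ← Finset.sum_add_distrib]
      rfl
    rw [hE]
    set w : Fin g → V := fun i => (p i).1 • a i + (p i).2 • b i with hw
    have horth : ∀ i ∈ Finset.univ, ∀ j ∈ Finset.univ, i ≠ j → B (w i) (w j) = 0 := by
      intro i _ j _ hij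
      have hba : B (b i) (a j) = 0 := by
        rw [arf_B_symm B q hq]
        simpa [Ne.symm hij] using hβab j i
      simp only [hw, map_add, map_smul, LinearMap.add_apply, LinearMap.smul_apply,
        smul_eq_mul]
      rw [hβaa i j, hβbb i j, hβab i j, hba]
      simp [hij]
    rw [arf_q_sum B q hq _ w horth]
    refine Finset.sum_congr rfl fun i _ => ?_
    rw [hq, arf_q_smul B q hq, arf_q_smul B q hq]
    have : B ((p i).1 • a i) ((p i).2 • b i) = (p i).1 * (p i).2 := by
      simp only [map_smul, LinearMap.smul_apply, smul_eq_mul]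
      rw [hβab i i]; simp [mul_comm]
    rw [this]
  calc ∑ x : V, arfChi (q x)
      = ∑ p : Fin g → ZMod 2 × ZMod 2, arfChi (q (E p)) := (Equiv.sum_comp E _).symm
    _ = ∑ p : Fin g → ZMod 2 × ZMod 2, ∏ i : Fin g,
          arfChi ((p i).1 * q (a i) + (p i).2 * q (b i) + (p i).1 * (p i).2) := by
        refine Finset.sum_congr rfl fun p _ => ?_
        rw [key p, arfChi_sum]
    _ = ∏ i : Fin g, ∑ cd : ZMod 2 × ZMod 2,
          arfChi (cd.1 * q (a i) + cd.2 * q (b i) + cd.1 * cd.2) := by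
        rw [Finset.prod_univ_sum]
        rw [Fintype.piFinset_univ]
    _ = ∏ i : Fin g, (2 * arfChi (q (a i) * q (b i))) := by
        refine Finset.prod_congr rfl fun i _ => arfChi_inner_sum _ _
    _ = 2 ^ g * arfChi (∑ i : Fin g, q (a i) * q (b i)) := by
        rw [Finset.prod_mul_distrib, Finset.prod_const, arfChi_sum]
        simp

end Gauss

/-- let `q : V → ℤ/2` be a quadratic form on a `ℤ/2`-vector space `V` whose
associated bilinear form `B(x,y) = q(x+y) + q(x) + q(y)` admits a symplectic basis
`(a₁,b₁,…,a_g,b_g)`.  Then the Arf invariant `Arf(q) = Σᵢ q(aᵢ)q(bᵢ)` is independent of the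
choice of symplectic basis. -/
theorem arf_invariant_well_defined
    {V : Type*} [AddCommGroup V] [Module (ZMod 2) V]
    (B : V →ₗ[ZMod 2] V →ₗ[ZMod 2] ZMod 2) (q : V → ZMod 2)
    (hq : ∀ x y : V, q (x + y) = q x + q y + B x y)
    {g g' : ℕ}
    (β : Module.Basis (Fin g ⊕ Fin g) (ZMod 2) V)
    (β' : Module.Basis (Fin g' ⊕ Fin g') (ZMod 2) V)
    (hβaa : ∀ i j, B (β (Sum.inl i)) (β (Sum.inl j)) = 0)
    (hβbb : ∀ i j, B (β (Sum.inr i)) (β (Sum.inr j)) = 0)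
    (hβab : ∀ i j, B (β (Sum.inl i)) (β (Sum.inr j)) = if i = j then 1 else 0)
    (hβ'aa : ∀ i j, B (β' (Sum.inl i)) (β' (Sum.inl j)) = 0)
    (hβ'bb : ∀ i j, B (β' (Sum.inr i)) (β' (Sum.inr j)) = 0)
    (hβ'ab : ∀ i j, B (β' (Sum.inl i)) (β' (Sum.inr j)) = if i = j then 1 else 0) :
    ∑ i : Fin g, q (β (Sum.inl i)) * q (β (Sum.inr i)) =
      ∑ i : Fin g', q (β' (Sum.inl i)) * q (β' (Sum.inr i)) := by
  classical
  haveI : Fintype V := Module.fintypeOfFintype β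
  have h1 := arf_gauss B q hq β hβaa hβbb hβab
  have h2 := arf_gauss B q hq β' hβ'aa hβ'bb hβ'ab
  set A := ∑ i : Fin g, q (β (Sum.inl i)) * q (β (Sum.inr i)) with hA
  set A' := ∑ i : Fin g', q (β' (Sum.inl i)) * q (β' (Sum.inr i)) with hA'
  have h : (2 : ℤ) ^ g * arfChi A = 2 ^ g' * arfChi A' := h1 ▸ h2 ▸ rfl
  have habs : ∀ x : ZMod 2, (arfChi x).natAbs = 1 := by decide
  have hgg : g = g' := by
    have := congrArg Int.natAbs h
    rw [Int.natAbs_mul, Int.natAbs_mul, Int.natAbs_pow, Int.natAbs_pow,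
      habs, habs, mul_one, mul_one] at this
    exact Nat.pow_right_injective (le_refl 2) (by simpa using this)
  subst hgg
  have hc : arfChi A = arfChi A' :=
    mul_left_cancel₀ (pow_ne_zero g (two_ne_zero : (2:ℤ) ≠ 0)) h
  have hinj : ∀ x y : ZMod 2, arfChi x = arfChi y → x = y := by decide
  exact hinj A A' hc
end

section
/- In the abelian group A₁(P) defined by multilinearity, cyclic symmetry, and the slide relation Y[z;z;w] = Y[s;z;w] (s the distinguished order-2 element), every generator Y[z₁;z₂;z₃] with zᵢ ∈ {s, (e₁,0), …, (eₙ,0)} is equal, up to sign, to one of the following normal forms: Y[(e_i,0);(e_j,0);(e_k,0)] with i<j<k, Y[(e_i,0);(e_j,0);s] with i<j, Y[(e_i,0);s;s], or Y[s;s;s]; moreover 2·Y[(e_i,0);(e_j,0);s] = 0, 2·Y[(e_i,0);s;s] = 0, and 2·Y[s;s;s] = 0 in A₁(P). -/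
/-- `P = H ⊕ ℤ/2` with `H = ℤⁿ`. -/
abbrev PGrp (n : ℕ) := (Fin n → ℤ) × ZMod 2

/-- The distinguished element `s = (0,1)` of `P`. -/
def sP (n : ℕ) : PGrp n := (0, 1)

/-- The relations defining `A₁(P)`: multilinearity in the first slot, cyclic symmetry, and
the slide relation `Y[z;z;w] = Y[s;z;w]` (these together give multilinearity in each slot). -/
def A1rels (n : ℕ) : AddSubgroup (FreeAbelianGroup (PGrp n × PGrp n × PGrp n)) :=
  AddSubgroup.closure
    ({x | ∃ a b c d : PGrp n, x = FreeAbelianGroup.of (a + b, c, d) -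
        FreeAbelianGroup.of (a, c, d) - FreeAbelianGroup.of (b, c, d)} ∪
     {x | ∃ a b c : PGrp n, x = FreeAbelianGroup.of (a, b, c) -
        FreeAbelianGroup.of (b, c, a)} ∪
     {x | ∃ a b : PGrp n, x = FreeAbelianGroup.of (a, a, b) -
        FreeAbelianGroup.of (sP n, a, b)})

/-- The abelian group `A₁(P)` of `Y`-shaped diagrams with univalent vertices labelled by
`P = ℤⁿ ⊕ ℤ/2`, modulo multilinearity, cyclic symmetry and the slide relation. -/
def A1 (n : ℕ) := FreeAbelianGroup (PGrp n × PGrp n × PGrp n) ⧸ A1rels n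

instance (n : ℕ) : AddCommGroup (A1 n) := by
  unfold A1; infer_instance

/-- The generator `Y[z₁;z₂;z₃]` of `A₁(P)`. -/
def Ymk (n : ℕ) (z₁ z₂ z₃ : PGrp n) : A1 n :=
  QuotientAddGroup.mk (FreeAbelianGroup.of (z₁, z₂, z₃))

/-- The basis vector `eᵢ` of `H = ℤⁿ`. -/
def eZ (n : ℕ) (i : Fin n) : Fin n → ℤ := Pi.single i 1

lemma Ymk_add (n : ℕ) (a b c d : PGrp n) :
    Ymk n (a + b) c d = Ymk n a c d + Ymk n b c d := by
  have hmem : FreeAbelianGroup.of (a + b, c, d) - FreeAbelianGroup.of (a, c, d) -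
      FreeAbelianGroup.of (b, c, d) ∈ A1rels n :=
    AddSubgroup.subset_closure (Or.inl (Or.inl ⟨a, b, c, d, rfl⟩))
  have h := (QuotientAddGroup.eq_zero_iff _).mpr hmem
  rw [QuotientAddGroup.mk_sub, QuotientAddGroup.mk_sub, sub_sub, sub_eq_zero] at h
  exact h

lemma Ymk_cyc (n : ℕ) (a b c : PGrp n) : Ymk n a b c = Ymk n b c a := by
  have hmem : FreeAbelianGroup.of (a, b, c) - FreeAbelianGroup.of (b, c, a) ∈ A1rels n :=
    AddSubgroup.subset_closure (Or.inl (Or.inr ⟨a, b, c, rfl⟩))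
  have h := (QuotientAddGroup.eq_zero_iff _).mpr hmem
  rw [QuotientAddGroup.mk_sub, sub_eq_zero] at h
  exact h

lemma Ymk_slide (n : ℕ) (a b : PGrp n) : Ymk n a a b = Ymk n (sP n) a b := by
  have hmem : FreeAbelianGroup.of (a, a, b) - FreeAbelianGroup.of (sP n, a, b) ∈ A1rels n :=
    AddSubgroup.subset_closure (Or.inr ⟨a, b, rfl⟩)
  have h := (QuotientAddGroup.eq_zero_iff _).mpr hmem
  rw [QuotientAddGroup.mk_sub, sub_eq_zero] at h
  exact h

lemma Ymk_zero (n : ℕ) (b c : PGrp n) : Ymk n 0 b c = 0 := by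
  have h := Ymk_add n 0 0 b c
  rw [add_zero] at h
  exact left_eq_add.mp h

lemma sP_add_sP (n : ℕ) : sP n + sP n = 0 := by
  unfold sP
  have h : (1 : ZMod 2) + 1 = 0 := by decide
  rw [Prod.mk_add_mk, h, add_zero]
  rfl

lemma Ymk_two (n : ℕ) (b c : PGrp n) : 2 • Ymk n (sP n) b c = 0 := by
  rw [two_smul, ← Ymk_add, sP_add_sP, Ymk_zero]

lemma Ymk_add2 (n : ℕ) (a b b' c : PGrp n) :
    Ymk n a (b + b') c = Ymk n a b c + Ymk n a b' c := by
  calc Ymk n a (b + b') c = Ymk n (b + b') c a := Ymk_cyc n a (b + b') c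
    _ = Ymk n b c a + Ymk n b' c a := Ymk_add n b b' c a
    _ = Ymk n a b c + Ymk n a b' c := by
        rw [Ymk_cyc n a b c, Ymk_cyc n a b' c]

lemma Ymk_swap12 (n : ℕ) (a b c : PGrp n) : Ymk n b a c = -Ymk n a b c := by
  have e1 : Ymk n (a + b) (a + b) c
      = Ymk n a a c + Ymk n a b c + Ymk n b a c + Ymk n b b c := by
    rw [Ymk_add, Ymk_add2, Ymk_add2]; abel
  have e2 : Ymk n (a + b) (a + b) c = Ymk n (sP n) a c + Ymk n (sP n) b c := by
    rw [Ymk_slide, Ymk_add2]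
  have key : Ymk n a b c + Ymk n b a c
      = (Ymk n a a c + Ymk n a b c + Ymk n b a c + Ymk n b b c)
        - (Ymk n (sP n) a c + Ymk n (sP n) b c) := by
    rw [Ymk_slide n a c, Ymk_slide n b c]; abel
  rw [← e1, ← e2, sub_self] at key
  exact eq_neg_of_add_eq_zero_left (by rw [add_comm]; exact key)

lemma Ymk_swap13 (n : ℕ) (a b c : PGrp n) : Ymk n c b a = -Ymk n a b c := by
  rw [Ymk_cyc n c b a]; exact Ymk_swap12 n a b c

lemma Ymk_swap23 (n : ℕ) (a b c : PGrp n) : Ymk n a c b = -Ymk n a b c := by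
  rw [Ymk_cyc n a c b]; exact Ymk_swap13 n a b c

lemma pm_neg {n : ℕ} {x y w : A1 n} (h : x = -y) (hpm : y = w ∨ y = -w) :
    x = w ∨ x = -w := by
  rcases hpm with rfl | rfl
  · exact Or.inr h
  · exact Or.inl (by rw [h, neg_neg])

def IsNF (n : ℕ) (w : A1 n) : Prop :=
  (∃ i j k : Fin n, i < j ∧ j < k ∧
      w = Ymk n (eZ n i, 0) (eZ n j, 0) (eZ n k, 0)) ∨
  (∃ i j : Fin n, i < j ∧ w = Ymk n (eZ n i, 0) (eZ n j, 0) (sP n)) ∨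
  (∃ i : Fin n, w = Ymk n (eZ n i, 0) (sP n) (sP n)) ∨
  w = Ymk n (sP n) (sP n) (sP n)

lemma nf2 (n : ℕ) (i j : Fin n) :
    ∃ w : A1 n, IsNF n w ∧
      (Ymk n (eZ n i, 0) (eZ n j, 0) (sP n) = w ∨
       Ymk n (eZ n i, 0) (eZ n j, 0) (sP n) = -w) := by
  rcases lt_trichotomy i j with h | rfl | h
  · exact ⟨_, Or.inr (Or.inl ⟨i, j, h, rfl⟩), Or.inl rfl⟩
  · refine ⟨_, Or.inr (Or.inr (Or.inl ⟨i, rfl⟩)), Or.inl ?_⟩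
    rw [Ymk_slide, Ymk_cyc]
  · refine ⟨_, Or.inr (Or.inl ⟨j, i, h, rfl⟩), Or.inr ?_⟩
    exact Ymk_swap12 n (eZ n j, 0) (eZ n i, 0) (sP n)

lemma nf3 (n : ℕ) (i j k : Fin n) :
    ∃ w : A1 n, IsNF n w ∧
      (Ymk n (eZ n i, 0) (eZ n j, 0) (eZ n k, 0) = w ∨
       Ymk n (eZ n i, 0) (eZ n j, 0) (eZ n k, 0) = -w) := by
  rcases eq_or_ne i j with rfl | hij
  · obtain ⟨w, hw, hpm⟩ := nf2 n i k
    refine ⟨w, hw, ?_⟩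
    rw [Ymk_slide, Ymk_cyc]
    exact hpm
  rcases eq_or_ne j k with rfl | hjk
  · obtain ⟨w, hw, hpm⟩ := nf2 n j i
    refine ⟨w, hw, ?_⟩
    rw [Ymk_cyc n (eZ n i, 0), Ymk_slide, Ymk_cyc]
    exact hpm
  rcases eq_or_ne i k with rfl | hik
  · obtain ⟨w, hw, hpm⟩ := nf2 n i j
    refine ⟨w, hw, ?_⟩
    rw [Ymk_cyc n (eZ n i, 0) (eZ n j, 0), Ymk_cyc n (eZ n j, 0), Ymk_slide, Ymk_cyc]
    exact hpm
  rcases hij.lt_or_gt with h1 | h1 <;> rcases hjk.lt_or_gt with h2 | h2 <;>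
    rcases hik.lt_or_gt with h3 | h3
  · exact ⟨_, Or.inl ⟨i, j, k, h1, h2, rfl⟩, Or.inl rfl⟩
  · exact absurd (h1.trans h2) (lt_asymm h3)
  · exact ⟨_, Or.inl ⟨i, k, j, h3, h2, rfl⟩,
      Or.inr (Ymk_swap23 n (eZ n i, 0) (eZ n k, 0) (eZ n j, 0))⟩
  · exact ⟨_, Or.inl ⟨k, i, j, h3, h1, rfl⟩,
      Or.inl (Ymk_cyc n (eZ n k, 0) (eZ n i, 0) (eZ n j, 0)).symm⟩
  · exact ⟨_, Or.inl ⟨j, i, k, h1, h3, rfl⟩,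
      Or.inr (Ymk_swap12 n (eZ n j, 0) (eZ n i, 0) (eZ n k, 0))⟩
  · exact ⟨_, Or.inl ⟨j, k, i, h2, h3, rfl⟩,
      Or.inl (Ymk_cyc n (eZ n i, 0) (eZ n j, 0) (eZ n k, 0))⟩
  · exact absurd (h2.trans h1) (lt_asymm h3)
  · exact ⟨_, Or.inl ⟨k, j, i, h2, h1, rfl⟩,
      Or.inr (Ymk_swap13 n (eZ n k, 0) (eZ n j, 0) (eZ n i, 0))⟩


/-- in `A₁(P)`, every generator `Y[z₁;z₂;z₃]` whose entries lie in
`{s, (e₁,0), …, (eₙ,0)}` equals, up to sign, one of the normal forms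
`Y[(eᵢ,0);(eⱼ,0);(e_k,0)]` (`i<j<k`), `Y[(eᵢ,0);(eⱼ,0);s]` (`i<j`), `Y[(eᵢ,0);s;s]` or
`Y[s;s;s]`; moreover the latter three kinds of normal forms are `2`-torsion. -/
theorem A1_normal_forms (n : ℕ) :
    (∀ z₁ z₂ z₃ : PGrp n,
      (z₁ = sP n ∨ ∃ i, z₁ = (eZ n i, 0)) →
      (z₂ = sP n ∨ ∃ i, z₂ = (eZ n i, 0)) →
      (z₃ = sP n ∨ ∃ i, z₃ = (eZ n i, 0)) →
      ∃ w : A1 n,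
        ((∃ i j k : Fin n, i < j ∧ j < k ∧
            w = Ymk n (eZ n i, 0) (eZ n j, 0) (eZ n k, 0)) ∨
         (∃ i j : Fin n, i < j ∧ w = Ymk n (eZ n i, 0) (eZ n j, 0) (sP n)) ∨
         (∃ i : Fin n, w = Ymk n (eZ n i, 0) (sP n) (sP n)) ∨
         w = Ymk n (sP n) (sP n) (sP n)) ∧
        (Ymk n z₁ z₂ z₃ = w ∨ Ymk n z₁ z₂ z₃ = -w)) ∧
    (∀ i j : Fin n, 2 • Ymk n (eZ n i, 0) (eZ n j, 0) (sP n) = 0) ∧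
    (∀ i : Fin n, 2 • Ymk n (eZ n i, 0) (sP n) (sP n) = 0) ∧
    2 • Ymk n (sP n) (sP n) (sP n) = 0 := by
  refine ⟨?_, ?_, ?_, Ymk_two n _ _⟩
  · rintro z₁ z₂ z₃ (rfl | ⟨i, rfl⟩) (rfl | ⟨j, rfl⟩) (rfl | ⟨k, rfl⟩)
    · exact ⟨_, Or.inr (Or.inr (Or.inr rfl)), Or.inl rfl⟩
    · refine ⟨_, Or.inr (Or.inr (Or.inl ⟨k, rfl⟩)), Or.inl ?_⟩
      exact (Ymk_cyc n _ _ _).trans (Ymk_cyc n _ _ _)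
    · exact ⟨_, Or.inr (Or.inr (Or.inl ⟨j, rfl⟩)), Or.inl (Ymk_cyc n _ _ _)⟩
    · obtain ⟨w, hw, hpm⟩ := nf2 n j k
      refine ⟨w, hw, ?_⟩
      rw [Ymk_cyc]
      exact hpm
    · exact ⟨_, Or.inr (Or.inr (Or.inl ⟨i, rfl⟩)), Or.inl rfl⟩
    · obtain ⟨w, hw, hpm⟩ := nf2 n i k
      refine ⟨w, hw, pm_neg ?_ hpm⟩
      exact Ymk_swap23 n (eZ n i, 0) (eZ n k, 0) (sP n)
    · obtain ⟨w, hw, hpm⟩ := nf2 n i j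
      exact ⟨w, hw, hpm⟩
    · obtain ⟨w, hw, hpm⟩ := nf3 n i j k
      exact ⟨w, hw, hpm⟩
  · intro i j
    rw [Ymk_cyc, Ymk_cyc]
    exact Ymk_two n _ _
  · intro i
    rw [Ymk_cyc]
    exact Ymk_two n _ _
end
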